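/- arXiv:1608.06621 — 10 statements merged into one kernel-verified Lean document; each statement's English description precedes it below -/
import Mathlib

section
/- For every integer k ≥ 2, every oriented k-uniform hypergraph with Property O has at least k! edges (i.e., the lower bound f(k) ≥ k! holds). -/
/-!
Encode the orderings of `V` as bijections `V ≃ Fin n`. Each ordering makes exactly one of the
`k!` rearrangements of a `k`-tuple `e` increasing, and all rearrangements are increasing in
equally many orderings, so `e` is increasing in exactly a `1/k!` fraction of the orderings.
Property O says that the edges of `H` cover all orderings, hence there are at least `k!` edges.
-/

/-- An ordered `k`-set (`k`-tuple of distinct elements of `V`), given as an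
embedding `Fin k ↪ V`, is *consistent* with a (strict) linear order `r` on `V`
if its entries are increasing with respect to `r`. -/
def Consistent {k : ℕ} {V : Type*} (r : V → V → Prop) (e : Fin k ↪ V) : Prop :=
  ∀ i j : Fin k, i < j → r (e i) (e j)

/-- An *oriented `k`-uniform hypergraph* on `V`: a family of `k`-tuples of
distinct elements of `V` (embeddings `Fin k ↪ V`) such that no two tuples have
the same underlying `k`-element set. -/
structure OrientedHypergraph (k : ℕ) (V : Type*) where
  edges : Finset (Fin k ↪ V)
  eq_of_range_eq : ∀ e ∈ edges, ∀ f ∈ edges, Set.range ⇑e = Set.range ⇑f → e = f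

/-- *Property O*: for every linear order (given by its strict order relation `r`)
on the vertex set, some edge is consistent with it. -/
def PropertyO {k : ℕ} {V : Type*} (H : OrientedHypergraph k V) : Prop :=
  ∀ r : V → V → Prop, IsStrictTotalOrder V r → ∃ e ∈ H.edges, Consistent r e

/-- A *`k`-tournament*: an oriented `k`-uniform hypergraph containing a tuple
for every `k`-element subset of the vertex set (such a tuple is unique by
`eq_of_range_eq`). -/
def IsTournament {k : ℕ} {V : Type*} (H : OrientedHypergraph k V) : Prop :=
  ∀ S : Finset V, S.card = k → ∃ e ∈ H.edges, Set.range ⇑e = ↑S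

open Equiv Finset

theorem Tuple.eq_sort_iff_strictMono {α : Type*} [LinearOrder α] {n : ℕ} {f : Fin n → α}
    (hf : Function.Injective f) {σ : Perm (Fin n)} :
    σ = Tuple.sort f ↔ StrictMono (f ∘ σ) := by
  rw [Tuple.eq_sort_iff]
  exact ⟨fun h => h.1.strictMono_of_injective (hf.comp σ.injective),
    fun h => ⟨h.monotone, fun i j hij hfij => absurd (σ.injective (hf hfij)) hij.ne⟩⟩

section IncreasingOrders

variable {V α : Type*} [Fintype V] [DecidableEq V] [LinearOrder α] [Fintype α] {k : ℕ}

variable (α) in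
open scoped Classical in
noncomputable def increasingOrders (e : Fin k ↪ V) : Finset (V ≃ α) :=
  {φ | StrictMono (φ ∘ e)}

theorem mem_increasingOrders {e : Fin k ↪ V} {φ : V ≃ α} :
    φ ∈ increasingOrders α e ↔ StrictMono (φ ∘ e) := by
  simp [increasingOrders]

theorem card_increasingOrders_reindex (σ : Perm (Fin k)) (e : Fin k ↪ V) :
    #(increasingOrders α (σ.toEmbedding.trans e)) = #(increasingOrders α e) := by
  set π := σ.viaFintypeEmbedding e
  have hπ (φ : V ≃ α) : ⇑(π.trans φ) ∘ e = φ ∘ (σ.toEmbedding.trans e) :=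
    funext fun i => by simp [π]
  refine card_nbij' (fun φ => π.trans φ) (fun ψ => π.symm.trans ψ) ?_ ?_ ?_ ?_
  · intro φ hφ
    rw [mem_coe, mem_increasingOrders] at hφ ⊢
    rwa [hπ]
  · intro ψ hψ
    rw [mem_coe, mem_increasingOrders] at hψ ⊢
    rwa [← hπ, ← Equiv.trans_assoc, Equiv.self_trans_symm, Equiv.refl_trans]
  · intro φ _
    simp [← Equiv.trans_assoc]
  · intro ψ _
    simp [← Equiv.trans_assoc]

theorem factorial_mul_card_increasingOrders (e : Fin k ↪ V) :
    k.factorial * #(increasingOrders α e) = Fintype.card (V ≃ α) := by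
  have hfiber (σ : Perm (Fin k)) :
      ({φ | Tuple.sort (φ ∘ e) = σ} : Finset (V ≃ α)) =
        increasingOrders α (σ.toEmbedding.trans e) := by
    ext φ
    rw [mem_filter_univ, mem_increasingOrders, eq_comm,
      Tuple.eq_sort_iff_strictMono (φ.injective.comp e.injective)]
    rfl
  calc k.factorial * #(increasingOrders α e)
      = ∑ σ : Perm (Fin k), #(increasingOrders α (σ.toEmbedding.trans e)) := by
        simp [card_increasingOrders_reindex, Fintype.card_perm]
    _ = Fintype.card (V ≃ α) := by
        simp only [← hfiber]
        exact (card_eq_sum_card_fiberwise fun _ _ => mem_univ _).symm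

theorem PropertyO.subset_biUnion_increasingOrders {H : OrientedHypergraph k V}
    (hO : PropertyO H) : (univ : Finset (V ≃ α)) ⊆ H.edges.biUnion (increasingOrders α) := by
  intro φ _
  obtain ⟨e, he, hcons⟩ := hO _ (φ.injective.isStrictTotalOrder_onFun (r := (· < ·)))
  exact mem_biUnion.2 ⟨e, he, mem_increasingOrders.2 hcons⟩

end IncreasingOrders

theorem lower_bound_propertyO_general {V : Type*} [Fintype V] (k : ℕ)
    (H : OrientedHypergraph k V) (hO : PropertyO H) :
    k.factorial ≤ H.edges.card := by
  classical
  let α := Fin (Fintype.card V)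
  have horders_pos : 0 < Fintype.card (V ≃ α) := Fintype.card_pos_iff.2 ⟨Fintype.equivFin V⟩
  refine Nat.le_of_mul_le_mul_right ?_ horders_pos
  calc k.factorial * Fintype.card (V ≃ α)
      ≤ k.factorial * ∑ e ∈ H.edges, #(increasingOrders α e) := by
        rw [← card_univ]
        gcongr
        exact (card_le_card hO.subset_biUnion_increasingOrders).trans card_biUnion_le
    _ = #H.edges * Fintype.card (V ≃ α) := by
        simp [mul_sum, factorial_mul_card_increasingOrders]

/-- For every integer `k ≥ 2`, every oriented `k`-uniform hypergraph
with Property O has at least `k!` edges. -/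
theorem lower_bound_propertyO {V : Type*} [Fintype V] (k : ℕ) (hk : 2 ≤ k)
    (H : OrientedHypergraph k V) (hO : PropertyO H) :
    k.factorial ≤ H.edges.card :=
  lower_bound_propertyO_general k H hO
end

section
/- Let k ≥ 2 and n ≥ k be integers. If n!·(1 − 1/k!)^{C(n,k)} < 1, then there exists a k-tournament on an n-element vertex set that has Property O. -/
/-! Orient every `k`-set independently and uniformly at random. For a fixed linear order, each
`k`-set has one of its `k!` orientations consistent with it, so the order is missed by
every edge with probability `(1 - 1/k!)^C(n,k)`; by the union bound over the `n!` orders some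
tournament is consistent with all of them. In counting form: each of the `n!` orders is missed
by at most `(k! - 1)^C(n,k)` of the `(k!)^C(n,k)` tournaments. -/

open Finset Fintype

theorem exists_pi_forall_exists_of_card_mul_lt {O ι : Type*} {A : ι → Type*} [Fintype O]
    [Fintype ι] [∀ i, Fintype (A i)] (P : O → ∀ i, A i → Prop) (hP : ∀ o i, ∃ a, P o i a)
    (h : card O * ∏ i, (card (A i) - 1) < ∏ i, card (A i)) :
    ∃ f : ∀ i, A i, ∀ o, ∃ i, P o i (f i) := by
  classical
  choose g hg using hP
  let avoiding (o : O) : Finset (∀ i, A i) := {f | ∀ i, f i ≠ g o i}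
  have card_avoiding (o : O) : #(avoiding o) = ∏ i, (card (A i) - 1) := by
    calc #(avoiding o) = card {f : ∀ i, A i // ∀ i, f i ≠ g o i} :=
          (Fintype.card_subtype _).symm
      _ = card (∀ i, {a : A i // a ≠ g o i}) :=
        card_congr (Equiv.subtypePiEquivPi (p := fun i a => a ≠ g o i))
      _ = ∏ i, (card (A i) - 1) := by simp
  obtain ⟨f, -, hf⟩ : ∃ f ∈ univ, f ∉ univ.biUnion avoiding := by
    refine exists_mem_notMem_of_card_lt_card ?_
    calc _ ≤ ∑ o, #(avoiding o) := card_biUnion_le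
      _ = card O * ∏ i, (card (A i) - 1) := by simp [card_avoiding]
      _ < _ := by simpa using h
  refine ⟨f, fun o => ?_⟩
  simp only [avoiding, mem_biUnion, mem_univ, mem_filter, true_and, not_exists, not_forall,
    not_not] at hf
  obtain ⟨i, hi⟩ := hf o
  exact ⟨i, hi ▸ hg o i⟩

section

variable {V : Type*} {k : ℕ}

theorem Consistent.mono {r s : V → V → Prop} (hrs : ∀ x y, r x y → s x y) {e : Fin k ↪ V}
    (he : Consistent r e) : Consistent s e :=
  fun i j hij => hrs _ _ (he i j hij)

theorem card_embedding_fin_finset {S : Finset V} (hS : #S = k) :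
    card (Fin k ↪ S) = k.factorial := by
  simp [card_embedding_eq, hS, Nat.descFactorial_self]

theorem range_embedding_trans_subtype {S : Finset V} (hS : #S = k) (e : Fin k ↪ S) :
    Set.range (e.trans (Function.Embedding.subtype (· ∈ S))) = S := by
  have he : Function.Surjective e :=
    ((bijective_iff_injective_and_card e).2 ⟨e.injective, by simp [hS]⟩).2
  rw [Function.Embedding.coe_trans, Set.range_comp, he.range_eq]
  simp

theorem eq_of_range_embedding_trans_subtype {S T : {S : Finset V // #S = k}} (e : Fin k ↪ S)
    (e' : Fin k ↪ T)
    (h : Set.range (e.trans (Function.Embedding.subtype _)) =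
      Set.range (e'.trans (Function.Embedding.subtype _))) : S = T := by
  rw [range_embedding_trans_subtype S.2, range_embedding_trans_subtype T.2] at h
  exact Subtype.ext (coe_injective h)

theorem exists_consistent_embedding {m : ℕ} (o : V ≃ Fin m) {S : Finset V} (hS : #S = k) :
    ∃ e : Fin k ↪ S,
      Consistent (fun x y => o x < o y) (e.trans (Function.Embedding.subtype (· ∈ S))) := by
  have hT : #(S.map o.toEmbedding) = k := by simpa using hS
  let f := (S.map o.toEmbedding).orderEmbOfFin hT
  have hf (i : Fin k) : o.symm (f i) ∈ S :=
    mem_map_equiv.1 (orderEmbOfFin_mem _ hT i)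
  refine ⟨⟨fun i => ⟨o.symm (f i), hf i⟩, fun i j hij => f.injective ?_⟩, fun i j hij => ?_⟩
  · simpa using hij
  · show o (o.symm (f i)) < o (o.symm (f j))
    simpa using f.strictMono hij

theorem IsStrictTotalOrder.exists_equiv_fin [Fintype V] {r : V → V → Prop}
    (hr : IsStrictTotalOrder V r) : ∃ o : V ≃ Fin (card V), ∀ x y, o x < o y → r x y := by
  classical
  let := linearOrderOfSTO r
  exact ⟨(orderIsoFinOfCardEq V rfl).symm.toEquiv,
    fun x y => (orderIsoFinOfCardEq V rfl).symm.lt_iff_lt.1⟩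

end

namespace OrientedHypergraph

variable {V : Type*} [Fintype V] {k : ℕ}

def ofOrientations (f : ∀ S : {S : Finset V // #S = k}, Fin k ↪ S) :
    OrientedHypergraph k V where
  edges := univ.map ⟨fun S => (f S).trans (Function.Embedding.subtype _), fun S T h =>
    eq_of_range_embedding_trans_subtype (f S) (f T)
      (congrArg (fun e : Fin k ↪ V => Set.range e) h)⟩
  eq_of_range_eq := by
    rintro _ he _ he' h
    obtain ⟨S, -, rfl⟩ := mem_map.1 he
    obtain ⟨T, -, rfl⟩ := mem_map.1 he'
    rw [eq_of_range_embedding_trans_subtype (f S) (f T) h]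

theorem isTournament_ofOrientations (f : ∀ S : {S : Finset V // #S = k}, Fin k ↪ S) :
    IsTournament (ofOrientations f) := fun S hS =>
  ⟨_, mem_map_of_mem _ (mem_univ ⟨S, hS⟩), range_embedding_trans_subtype hS _⟩

theorem propertyO_ofOrientations (f : ∀ S : {S : Finset V // #S = k}, Fin k ↪ S)
    (hf : ∀ o : V ≃ Fin (card V), ∃ S,
      Consistent (fun x y => o x < o y) ((f S).trans (Function.Embedding.subtype _))) :
    PropertyO (ofOrientations f) := by
  intro r hr
  obtain ⟨o, hor⟩ := hr.exists_equiv_fin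
  obtain ⟨S, hS⟩ := hf o
  exact ⟨_, mem_map_of_mem _ (mem_univ S), hS.mono hor⟩

end OrientedHypergraph

theorem exists_isTournament_propertyO_of_card_mul_lt {V : Type*} [Fintype V] [DecidableEq V]
    {k : ℕ} (h : (card V).factorial * (k.factorial - 1) ^ (card V).choose k <
      k.factorial ^ (card V).choose k) :
    ∃ H : OrientedHypergraph k V, IsTournament H ∧ PropertyO H := by
  have hcard (S : {S : Finset V // #S = k}) : card (Fin k ↪ S) = k.factorial :=
    card_embedding_fin_finset S.2
  obtain ⟨f, hf⟩ := exists_pi_forall_exists_of_card_mul_lt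
    (fun (o : V ≃ Fin (card V)) (S : {S : Finset V // #S = k}) (e : Fin k ↪ S) =>
      Consistent (fun x y => o x < o y) (e.trans (Function.Embedding.subtype _)))
    (fun o S => exists_consistent_embedding o S.2)
    (by simpa [hcard, card_equiv, card_finset_len] using h)
  exact ⟨_, OrientedHypergraph.isTournament_ofOrientations f,
    OrientedHypergraph.propertyO_ofOrientations f hf⟩

theorem tournament_exists_of_union_bound_general (k n : ℕ)
    (h : (n.factorial : ℝ) * (1 - 1 / (k.factorial : ℝ)) ^ n.choose k < 1) :
    ∃ H : OrientedHypergraph k (Fin n), IsTournament H ∧ PropertyO H := by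
  have hbound : n.factorial * (k.factorial - 1) ^ n.choose k < k.factorial ^ n.choose k := by
    have hfrac : (1 : ℝ) - 1 / k.factorial = ((k.factorial - 1 : ℕ) : ℝ) / k.factorial := by
      rw [Nat.cast_sub k.factorial_pos]
      field_simp
      simp
    rw [hfrac, div_pow, ← mul_div_assoc, div_lt_one (by positivity)] at h
    exact_mod_cast h
  exact exists_isTournament_propertyO_of_card_mul_lt (by simpa using hbound)

/-- Let `k ≥ 2` and `n ≥ k`. If `n!·(1 − 1/k!)^{C(n,k)} < 1`, then
there exists a `k`-tournament on an `n`-element vertex set with Property O. -/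
theorem tournament_exists_of_union_bound (k n : ℕ) (hk : 2 ≤ k) (hkn : k ≤ n)
    (h : (n.factorial : ℝ) * (1 - 1 / (k.factorial : ℝ)) ^ n.choose k < 1) :
    ∃ H : OrientedHypergraph k (Fin n), IsTournament H ∧ PropertyO H :=
  tournament_exists_of_union_bound_general k n h
end

section
/- There exists k_0 such that for every integer k ≥ k_0, setting n = ⌊(k/e)²·(π·e^{e²/2}·k³·ln k)^{1/k}⌋, the inequality C(n,k)·(1/k!) ≤ k²·ln k holds. -/
open Filter Finset

lemma stirling_lb (k : ℕ) (hk : 1 ≤ k) :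
    Real.sqrt Real.pi * (Real.sqrt (2 * (k : ℝ)) * ((k : ℝ) / Real.exp 1) ^ k)
      ≤ (k.factorial : ℝ) := by
  have htend : Tendsto (fun n => Stirling.stirlingSeq (n + 1)) atTop
      (nhds (Real.sqrt Real.pi)) :=
    Stirling.tendsto_stirlingSeq_sqrt_pi.comp (tendsto_add_atTop_nat 1)
  have hanti : Antitone fun n => Stirling.stirlingSeq (n + 1) :=
    Stirling.stirlingSeq'_antitone
  obtain ⟨m, rfl⟩ : ∃ m, k = m + 1 := ⟨k - 1, (Nat.succ_pred_eq_of_pos hk).symm⟩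
  have h1 : Real.sqrt Real.pi ≤ Stirling.stirlingSeq (m + 1) :=
    hanti.le_of_tendsto htend m
  have hden : 0 < Real.sqrt (2 * ((m + 1 : ℕ) : ℝ)) * (((m + 1 : ℕ) : ℝ) / Real.exp 1) ^ (m + 1) := by
    have : (0:ℝ) < ((m + 1 : ℕ) : ℝ) := by positivity
    positivity
  simp only [Stirling.stirlingSeq] at h1
  exact (le_div_iff₀ hden).mp h1


set_option maxHeartbeats 1000000 in
/-- For all sufficiently large `k`, with
`n = ⌊(k/e)²·(π·e^{e²/2}·k³·ln k)^{1/k}⌋`, one has `C(n,k)/k! ≤ k²·ln k`. -/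
theorem choose_div_factorial_le :
    ∃ k₀ : ℕ, ∀ k : ℕ, k₀ ≤ k →
      (Nat.choose (⌊((k : ℝ) / Real.exp 1) ^ 2 *
          (Real.pi * Real.exp (Real.exp 1 ^ 2 / 2) * (k : ℝ) ^ 3 * Real.log k)
            ^ (1 / (k : ℝ))⌋₊) k : ℝ) / (k.factorial : ℝ)
        ≤ (k : ℝ) ^ 2 * Real.log k := by
  use 10 ^ 6
  intro k hk
  have hk1 : (10 ^ 6 : ℝ) ≤ (k : ℝ) := by exact_mod_cast Nat.cast_le.mpr hk
  have hkpos : (0 : ℝ) < k := by linarith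
  have hknat1 : 1 ≤ k := le_trans (by norm_num) hk
  -- numerics
  have hE1 : Real.exp 1 < 2.7182818286 := Real.exp_one_lt_d9
  have hE2 : 2.7182818283 < Real.exp 1 := Real.exp_one_gt_d9
  have hEpos : (0:ℝ) < Real.exp 1 := Real.exp_pos 1
  have hEsq : Real.exp 1 ^ 2 < 7.3890560999 := by nlinarith
  have hEsq' : 7.389056097 < Real.exp 1 ^ 2 := by nlinarith
  have hl2 : 0.6931471803 < Real.log 2 := Real.log_two_gt_d9
  have hl2' : Real.log 2 < 0.6931471808 := Real.log_two_lt_d9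
  have hpi1 : 3.14 < Real.pi := Real.pi_gt_d2
  have hpi2 : Real.pi < 3.15 := Real.pi_lt_d2
  have hlogk1 : 1 ≤ Real.log k := by
    rw [Real.le_log_iff_exp_le hkpos]; linarith
  have hexp4 : Real.exp (Real.exp 1 ^ 2 / 2) ≤ 55 := by
    have h1 : Real.exp 1 ^ 2 / 2 ≤ (4 : ℝ) := by nlinarith
    have h2 : Real.exp (Real.exp 1 ^ 2 / 2) ≤ Real.exp 4 := Real.exp_le_exp.mpr h1
    have h3 : Real.exp (4 : ℝ) = Real.exp 1 ^ (4 : ℕ) := by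
      rw [Real.exp_one_pow]; norm_num
    have h4 : Real.exp 1 ^ (4 : ℕ) ≤ 55 := by nlinarith [hEsq, sq_nonneg (Real.exp 1), hEpos]
    linarith [h3 ▸ h2]
  set A := Real.pi * Real.exp (Real.exp 1 ^ 2 / 2) * (k : ℝ) ^ 3 * Real.log k with hAdef
  have hApos : 0 < A := by
    have h1 : 0 < Real.pi * Real.exp (Real.exp 1 ^ 2 / 2) * (k : ℝ) ^ 3 := by positivity
    exact mul_pos h1 (by linarith)
  set x := ((k : ℝ) / Real.exp 1) ^ 2 * A ^ (1 / (k : ℝ)) with hxdef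
  set n := ⌊x⌋₊ with hndef
  have hxnonneg : 0 ≤ x := by positivity
  have hnx : (n : ℝ) ≤ x := Nat.floor_le hxnonneg
  -- bound on A^(1/k)
  have hbpos : 0 < A ^ (1 / (k : ℝ)) := Real.rpow_pos_of_pos hApos _
  have hs1000 : (1000 : ℝ) ≤ Real.sqrt k := by
    have : (1000 : ℝ) = Real.sqrt (1000 ^ 2) := by
      rw [Real.sqrt_sq]; norm_num
    rw [this]
    exact Real.sqrt_le_sqrt (by norm_num; linarith)
  have hssq : Real.sqrt k ^ 2 = (k : ℝ) := Real.sq_sqrt hkpos.le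
  have hlogle : Real.log k ≤ 2 * Real.sqrt k := by
    have hsp : 0 < Real.sqrt k := Real.sqrt_pos.mpr hkpos
    have h1 : Real.log (Real.sqrt k) ≤ Real.sqrt k - 1 := Real.log_le_sub_one_of_pos hsp
    have h2 : Real.log (Real.sqrt k) = Real.log k / 2 := Real.log_sqrt hkpos.le
    linarith
  have hAk5 : A ≤ (k : ℝ) ^ 5 := by
    have hloglek : Real.log k ≤ (k : ℝ) := by
      linarith [Real.log_le_sub_one_of_pos hkpos]
    have hpe : Real.pi * Real.exp (Real.exp 1 ^ 2 / 2) ≤ 3.15 * 55 := by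
      nlinarith [Real.pi_pos, Real.exp_pos (Real.exp 1 ^ 2 / 2)]
    have hkl : (k : ℝ) ^ 3 * Real.log k ≤ (k : ℝ) ^ 3 * (k : ℝ) :=
      mul_le_mul_of_nonneg_left hloglek (by positivity)
    have step1 : A ≤ 3.15 * 55 * ((k : ℝ) ^ 3 * (k : ℝ)) := by
      rw [hAdef, mul_assoc]
      exact mul_le_mul hpe hkl (by positivity) (by norm_num)
    nlinarith [step1, mul_nonneg (pow_nonneg hkpos.le 4) (by linarith : (0:ℝ) ≤ (k:ℝ) - 173.25)]
  have hb102 : A ^ (1 / (k : ℝ)) ≤ 1.02 := by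
    have h1 : A ^ (1 / (k : ℝ)) ≤ ((k : ℝ) ^ 5) ^ (1 / (k : ℝ)) :=
      Real.rpow_le_rpow hApos.le hAk5 (by positivity)
    have h2 : ((k : ℝ) ^ 5) ^ (1 / (k : ℝ)) = Real.exp (Real.log k * (5 / (k : ℝ))) := by
      rw [← Real.rpow_natCast (k : ℝ) 5, ← Real.rpow_mul hkpos.le,
        Real.rpow_def_of_pos hkpos]
      congr 1
      push_cast
      ring
    have h3 : Real.log k * (5 / (k : ℝ)) ≤ 0.01 := by
      have heq : Real.log k * (5 / (k : ℝ)) = Real.log k * 5 / k := by ring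
      rw [heq, div_le_iff₀ hkpos]
      have h10 : 10 * Real.sqrt k ≤ 0.01 * k := by
        nlinarith [hs1000, hssq, Real.sqrt_nonneg (k:ℝ)]
      linarith
    have h4 : Real.exp (Real.log k * (5 / (k : ℝ))) ≤ Real.exp 0.01 := Real.exp_le_exp.mpr h3
    have h5 : Real.exp (0.01 : ℝ) ≤ 1.02 := by
      have ha := Real.add_one_le_exp (-(0.01 : ℝ))
      rw [Real.exp_neg] at ha
      have hp := Real.exp_pos (0.01 : ℝ)
      nlinarith [mul_inv_cancel₀ (ne_of_gt hp)]
    calc A ^ (1 / (k : ℝ)) ≤ ((k : ℝ) ^ 5) ^ (1 / (k : ℝ)) := h1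
      _ = Real.exp (Real.log k * (5 / (k : ℝ))) := h2
      _ ≤ Real.exp 0.01 := h4
      _ ≤ 1.02 := h5
  by_cases hkn : n < k
  · rw [Nat.choose_eq_zero_of_lt hkn]
    simp only [Nat.cast_zero, zero_div]
    have : (0:ℝ) ≤ Real.log k := by linarith
    positivity
  · push_neg at hkn
    have hnk : (k : ℝ) ≤ (n : ℝ) := Nat.cast_le.mpr hkn
    have hnpos : (0 : ℝ) < n := lt_of_lt_of_le hkpos hnk
    have hxpos : (0 : ℝ) < x := lt_of_lt_of_le hnpos hnx
    -- the Gauss sum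
    have hsum : (∑ i ∈ Finset.range k, (i : ℝ)) = (k : ℝ) * ((k : ℝ) - 1) / 2 := by
      have h := Finset.sum_range_id_mul_two k
      have h' : ((∑ i ∈ Finset.range k, i : ℕ) : ℝ) * 2 = (k : ℝ) * ((k : ℝ) - 1) := by
        rw [← Nat.cast_ofNat, ← Nat.cast_mul, h]
        push_cast [Nat.cast_sub hknat1]
        ring
      rw [Nat.cast_sum] at h'
      linarith
    -- descFactorial bound
    set S := ((k : ℝ) * ((k : ℝ) - 1) / 2) / (n : ℝ) with hSdef
    have hdesc : ((n.descFactorial k : ℕ) : ℝ) ≤ (n : ℝ) ^ k * Real.exp (-S) := by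
      have hcast : ((n.descFactorial k : ℕ) : ℝ) = ∏ i ∈ Finset.range k, ((n : ℝ) - (i : ℝ)) := by
        rw [Nat.descFactorial_eq_prod_range, Nat.cast_prod]
        refine Finset.prod_congr rfl fun i hi => ?_
        have : i ≤ n := le_of_lt (lt_of_lt_of_le (Finset.mem_range.mp hi) hkn)
        exact Nat.cast_sub this
      rw [hcast]
      calc ∏ i ∈ Finset.range k, ((n : ℝ) - (i : ℝ))
          ≤ ∏ i ∈ Finset.range k, ((n : ℝ) * Real.exp (-(i : ℝ) / (n : ℝ))) := by
            refine Finset.prod_le_prod (fun i hi => ?_) (fun i hi => ?_)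
            · have : (i : ℝ) ≤ (n : ℝ) := by
                exact_mod_cast Nat.cast_le.mpr
                  (le_of_lt (lt_of_lt_of_le (Finset.mem_range.mp hi) hkn))
              linarith
            · have h1 : (-(i : ℝ) / (n : ℝ)) + 1 ≤ Real.exp (-(i : ℝ) / (n : ℝ)) :=
                Real.add_one_le_exp _
              have h2 : (n : ℝ) * ((-(i : ℝ) / (n : ℝ)) + 1) = (n : ℝ) - (i : ℝ) := by
                field_simp
                ring_nf
              have h3 := mul_le_mul_of_nonneg_left h1 hnpos.le
              rw [h2] at h3
              exact h3
        _ = (n : ℝ) ^ k * Real.exp (-S) := by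
            rw [Finset.prod_mul_distrib, Finset.prod_const, Finset.card_range, ← Real.exp_sum]
            congr 1
            have heq : (∑ i ∈ Finset.range k, (-(i : ℝ) / (n : ℝ)))
                = (∑ i ∈ Finset.range k, (i : ℝ)) * (-1 / (n : ℝ)) := by
              rw [Finset.sum_mul]
              exact Finset.sum_congr rfl fun i _ => by ring
            rw [heq, hsum, hSdef]
            ring
    -- Stirling squared
    have hfact2 : Real.pi * (2 * (k : ℝ)) * ((k : ℝ) / Real.exp 1) ^ (2 * k)
        ≤ ((k.factorial : ℝ)) ^ 2 := by
      have h := stirling_lb k hknat1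
      have hnn : 0 ≤ Real.sqrt Real.pi * (Real.sqrt (2 * (k : ℝ)) * ((k : ℝ) / Real.exp 1) ^ k) := by
        positivity
      have h2 := pow_le_pow_left₀ hnn h 2
      calc Real.pi * (2 * (k : ℝ)) * ((k : ℝ) / Real.exp 1) ^ (2 * k)
          = (Real.sqrt Real.pi * (Real.sqrt (2 * (k : ℝ)) * ((k : ℝ) / Real.exp 1) ^ k)) ^ 2 := by
            rw [mul_pow, mul_pow, Real.sq_sqrt Real.pi_pos.le,
              Real.sq_sqrt (by positivity : (0:ℝ) ≤ 2 * (k : ℝ)), ← pow_mul]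
            ring_nf
        _ ≤ ((k.factorial : ℝ)) ^ 2 := h2
    -- x^k
    have hxk : x ^ k = ((k : ℝ) / Real.exp 1) ^ (2 * k) * A := by
      rw [hxdef, mul_pow, ← pow_mul]
      congr 1
      rw [← Real.rpow_natCast (A ^ (1 / (k : ℝ))) k, ← Real.rpow_mul hApos.le,
        one_div, inv_mul_cancel₀ (by positivity : (k : ℝ) ≠ 0), Real.rpow_one]
    -- lower bound on S
    have hS : Real.exp 1 ^ 2 / 2 - Real.log 2 ≤ S := by
      set b := A ^ (1 / (k : ℝ)) with hbdef
      have hc1 : 0 ≤ Real.exp 1 ^ 2 / 2 - Real.log 2 := by linarith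
      have hg1 : (Real.exp 1 ^ 2 / 2 - Real.log 2) * (2 * (k : ℝ) * b)
          ≤ (Real.exp 1 ^ 2 / 2 - Real.log 2) * (2 * (k : ℝ) * 1.02) := by
        apply mul_le_mul_of_nonneg_left _ hc1
        have : 2 * (k : ℝ) * b ≤ 2 * (k : ℝ) * 1.02 :=
          mul_le_mul_of_nonneg_left hb102 (by linarith)
        exact this
      have hEk : Real.exp 1 ^ 2 * (k : ℝ) ≤ 7.3890560999 * (k : ℝ) :=
        mul_le_mul_of_nonneg_right hEsq.le hkpos.le
      have hl2k : 0.6931471803 * (k : ℝ) ≤ Real.log 2 * (k : ℝ) :=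
        mul_le_mul_of_nonneg_right hl2.le hkpos.le
      have hg2 : (Real.exp 1 ^ 2 / 2 - Real.log 2) * (2 * (k : ℝ) * 1.02)
          ≤ Real.exp 1 ^ 2 * ((k : ℝ) - 1) := by nlinarith [hEk, hl2k, hEsq, hk1]
      have hgoal : (Real.exp 1 ^ 2 / 2 - Real.log 2) * (2 * (k : ℝ) * b)
          ≤ Real.exp 1 ^ 2 * ((k : ℝ) - 1) := le_trans hg1 hg2
      -- first: (E²/2 - log 2) ≤ (k(k-1)/2)/x
      have hxx : Real.exp 1 ^ 2 / 2 - Real.log 2 ≤ ((k : ℝ) * ((k : ℝ) - 1) / 2) / x := by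
        rw [le_div_iff₀ hxpos]
        have hxe : x = (k : ℝ) ^ 2 * b / Real.exp 1 ^ 2 := by
          rw [hxdef, div_pow]; ring
        rw [hxe, mul_div_assoc']
        rw [div_le_iff₀ (by positivity : (0:ℝ) < Real.exp 1 ^ 2)]
        nlinarith [mul_le_mul_of_nonneg_left hgoal hkpos.le]
      refine le_trans hxx ?_
      rw [hSdef]
      apply div_le_div_of_nonneg_left _ hnpos hnx
      nlinarith [hk1]
    -- exponential bound
    have hexp2 : Real.exp (Real.exp 1 ^ 2 / 2) * Real.exp (-S) ≤ 2 := by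
      rw [← Real.exp_add]
      have h1 : Real.exp 1 ^ 2 / 2 + -S ≤ Real.log 2 := by linarith
      calc Real.exp (Real.exp 1 ^ 2 / 2 + -S) ≤ Real.exp (Real.log 2) := Real.exp_le_exp.mpr h1
        _ = 2 := Real.exp_log (by norm_num)
    -- key bound
    have hkey : A * Real.exp (-S) ≤ (k : ℝ) ^ 2 * Real.log k * (Real.pi * (2 * (k : ℝ))) := by
      have hnnn : (0:ℝ) ≤ Real.pi * (k : ℝ) ^ 3 * Real.log k := by
        have : (0:ℝ) ≤ Real.pi * (k : ℝ) ^ 3 := by positivity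
        exact mul_nonneg this (by linarith)
      calc A * Real.exp (-S)
          = (Real.pi * (k : ℝ) ^ 3 * Real.log k)
            * (Real.exp (Real.exp 1 ^ 2 / 2) * Real.exp (-S)) := by rw [hAdef]; ring
        _ ≤ (Real.pi * (k : ℝ) ^ 3 * Real.log k) * 2 := mul_le_mul_of_nonneg_left hexp2 hnnn
        _ = (k : ℝ) ^ 2 * Real.log k * (Real.pi * (2 * (k : ℝ))) := by ring
    -- assemble
    have hfac_pos : (0 : ℝ) < (k.factorial : ℝ) := by exact_mod_cast k.factorial_pos
    rw [div_le_iff₀ hfac_pos]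
    have hchoose : ((n.choose k : ℕ) : ℝ) * (k.factorial : ℝ) = ((n.descFactorial k : ℕ) : ℝ) := by
      rw [mul_comm]
      exact_mod_cast (Nat.descFactorial_eq_factorial_mul_choose n k).symm
    refine le_of_mul_le_mul_right ?_ hfac_pos
    rw [hchoose]
    have hRHSnn : 0 ≤ (k : ℝ) ^ 2 * Real.log k := by
      have : (0:ℝ) ≤ (k : ℝ) ^ 2 := by positivity
      exact mul_nonneg this (by linarith)
    calc ((n.descFactorial k : ℕ) : ℝ)
        ≤ (n : ℝ) ^ k * Real.exp (-S) := hdesc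
      _ ≤ x ^ k * Real.exp (-S) := by
          have : (n : ℝ) ^ k ≤ x ^ k := pow_le_pow_left₀ (Nat.cast_nonneg n) hnx k
          exact mul_le_mul_of_nonneg_right this (Real.exp_pos _).le
      _ = ((k : ℝ) / Real.exp 1) ^ (2 * k) * (A * Real.exp (-S)) := by rw [hxk]; ring
      _ ≤ ((k : ℝ) / Real.exp 1) ^ (2 * k)
            * ((k : ℝ) ^ 2 * Real.log k * (Real.pi * (2 * (k : ℝ)))) :=
          mul_le_mul_of_nonneg_left hkey (by positivity)
      _ = (k : ℝ) ^ 2 * Real.log k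
            * (Real.pi * (2 * (k : ℝ)) * ((k : ℝ) / Real.exp 1) ^ (2 * k)) := by ring
      _ ≤ (k : ℝ) ^ 2 * Real.log k * ((k.factorial : ℝ)) ^ 2 :=
          mul_le_mul_of_nonneg_left hfact2 hRHSnn
      _ = (k : ℝ) ^ 2 * Real.log k * (k.factorial : ℝ) * (k.factorial : ℝ) := by ring
end

section
/- There exists k_0 such that for every integer k ≥ k_0, setting n = ⌊(k/e)²·(π·e^{e²/2}·k³·ln k)^{1/k}⌋, the inequality n!·(1 − 1/k!)^{C(n,k)} < 1 holds. -/
/-!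
Since `n! ≤ nⁿ` and `1 - x ≤ e^{-x}`, it suffices that
`n log n < C(n,k)/k! = n(n-1)⋯(n-k+1)/(k!)²`. Let `m = (k/e)² (π e^{e²/2} k³ log k)^{1/k}`,
so `m - 1 < n ≤ m` and `m ≥ k²/e²`. The numerator is at least
`∏_{j=1}^k (m - j) ≥ mᵏ exp(-∑ (j/m + 2j²/m²)) ≥ mᵏ exp(-e²/2 - O(1/k))`, and
`mᵏ = (k/e)^{2k} π e^{e²/2} k³ log k` while `k! ≤ e √k (k/e)ᵏ`; the factor `e^{e²/2}` cancels
and `C(n,k)/k! ≥ (π/e² - o(1)) k² log k`. On the other side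
`n log n ≤ m log m = (2/e² + o(1)) k² log k`, and `π > 2`.
-/

open Real Filter Topology Finset
open scoped Nat

lemma exp_neg_div_one_sub_le_one_sub {x : ℝ} (hx : x < 1) : exp (-(x / (1 - x))) ≤ 1 - x := by
  have h1x : 0 < 1 - x := sub_pos.2 hx
  calc exp (-(x / (1 - x))) = exp (1 - (1 - x)⁻¹) := by congr 1; field_simp; ring
    _ ≤ exp (log (1 - x)) := exp_le_exp.2 (one_sub_inv_le_log_of_pos h1x)
    _ = 1 - x := exp_log h1x

lemma exp_neg_add_two_mul_sq_le_one_sub {x : ℝ} (h0 : 0 ≤ x) (h : x ≤ 1 / 2) :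
    exp (-(x + 2 * x ^ 2)) ≤ 1 - x := by
  refine le_trans (exp_le_exp.2 ?_) (exp_neg_div_one_sub_le_one_sub (by linarith))
  rw [neg_le_neg_iff, div_le_iff₀ (by linarith)]
  nlinarith [mul_nonneg (mul_nonneg h0 h0) (by linarith : 0 ≤ 1 - 2 * x)]

lemma sum_range_cast_add_one (k : ℕ) : ∑ i ∈ range k, ((i : ℝ) + 1) = k * (k + 1) / 2 := by
  induction k with
  | zero => simp
  | succ k ih => rw [sum_range_succ, ih]; push_cast; ring

lemma pow_mul_exp_le_prod_sub {m : ℝ} {k : ℕ} (hk : 2 * k ≤ m) :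
    m ^ k * exp (-(k * (k + 1) / (2 * m) + 2 * k ^ 3 / m ^ 2)) ≤
      ∏ i ∈ range k, (m - (i + 1)) := by
  rcases Nat.eq_zero_or_pos k with rfl | hk0
  · simp
  have hm : 0 < m := by
    have : (1 : ℝ) ≤ k := by exact_mod_cast hk0
    linarith
  have hik : ∀ i ∈ range k, (i : ℝ) + 1 ≤ k := fun i hi => by
    exact_mod_cast mem_range.1 hi
  have hfactor : ∀ i ∈ range k,
      m * exp (-((i + 1) / m + 2 * ((i + 1) / m) ^ 2)) ≤ m - (i + 1) := by
    intro i hi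
    calc m * exp (-((i + 1) / m + 2 * ((i + 1) / m) ^ 2)) ≤ m * (1 - (i + 1) / m) := by
          gcongr
          refine exp_neg_add_two_mul_sq_le_one_sub (by positivity) ?_
          rw [div_le_iff₀ hm]; linarith [hik i hi]
      _ = m - (i + 1) := by field_simp
  have hsq : ∑ i ∈ range k, ((i : ℝ) + 1) ^ 2 ≤ (k : ℝ) ^ 3 :=
    calc ∑ i ∈ range k, ((i : ℝ) + 1) ^ 2 ≤ ∑ _i ∈ range k, (k : ℝ) ^ 2 :=
          sum_le_sum fun i hi => by gcongr; exact hik i hi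
      _ = k ^ 3 := by rw [sum_const, card_range, nsmul_eq_mul]; ring
  have hsum : ∑ i ∈ range k, ((i + 1) / m + 2 * ((i + 1) / m) ^ 2) ≤
      k * (k + 1) / (2 * m) + 2 * k ^ 3 / m ^ 2 :=
    calc ∑ i ∈ range k, ((i + 1) / m + 2 * ((i + 1) / m) ^ 2)
        = (∑ i ∈ range k, ((i : ℝ) + 1)) / m +
            2 * (∑ i ∈ range k, ((i : ℝ) + 1) ^ 2) / m ^ 2 := by
          rw [sum_add_distrib]
          simp only [sum_div, mul_sum, div_pow, mul_div_assoc]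
      _ ≤ k * (k + 1) / (2 * m) + 2 * k ^ 3 / m ^ 2 := by
          rw [sum_range_cast_add_one, div_div]
          gcongr
  calc m ^ k * exp (-(k * (k + 1) / (2 * m) + 2 * k ^ 3 / m ^ 2))
      ≤ m ^ k * exp (∑ i ∈ range k, -((i + 1) / m + 2 * ((i + 1) / m) ^ 2)) := by
        rw [sum_neg_distrib]; gcongr
    _ = ∏ i ∈ range k, m * exp (-((i + 1) / m + 2 * ((i + 1) / m) ^ 2)) := by
        rw [prod_mul_distrib, prod_const, card_range, exp_sum]
    _ ≤ ∏ i ∈ range k, (m - (i + 1)) :=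
        prod_le_prod (fun i _ => by positivity) hfactor

lemma prod_sub_le_descFactorial {m : ℝ} {n k : ℕ} (hkm : k ≤ m) (hmn : m < n + 1) :
    ∏ i ∈ range k, (m - (i + 1)) ≤ n.descFactorial k := by
  rw [Nat.descFactorial_eq_prod_range, Nat.cast_prod]
  refine prod_le_prod (fun i hi => ?_) (fun i hi => ?_)
  · have : (i : ℝ) + 1 ≤ k := by exact_mod_cast mem_range.1 hi
    linarith
  · have hi : (i : ℝ) + 1 ≤ k := by exact_mod_cast mem_range.1 hi
    have hin : i ≤ n := by
      have : (i : ℝ) < n + 1 := by linarith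
      exact Nat.lt_succ_iff.1 (by exact_mod_cast this)
    rw [Nat.cast_sub hin]
    linarith

lemma factorial_le_exp_one_mul_sqrt_mul_pow {k : ℕ} (hk : k ≠ 0) :
    (k ! : ℝ) ≤ exp 1 * √k * (k / exp 1) ^ k := by
  have hseq : Stirling.stirlingSeq k ≤ exp 1 / √2 := by
    obtain ⟨j, rfl⟩ := Nat.exists_eq_succ_of_ne_zero hk
    simpa [Stirling.stirlingSeq_one] using Stirling.stirlingSeq'_antitone (Nat.zero_le j)
  have hpos : 0 < √(2 * k) * ((k : ℝ) / exp 1) ^ k := by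
    have : (0 : ℝ) < k := by exact_mod_cast Nat.pos_of_ne_zero hk
    positivity
  calc (k ! : ℝ) = Stirling.stirlingSeq k * (√(2 * k) * ((k : ℝ) / exp 1) ^ k) := by
        rw [Stirling.stirlingSeq]; field_simp
    _ ≤ exp 1 / √2 * (√(2 * k) * ((k : ℝ) / exp 1) ^ k) := by gcongr
    _ = exp 1 * √k * (k / exp 1) ^ k := by
        rw [sqrt_mul zero_le_two]; field_simp

lemma factorial_mul_one_sub_inv_pow_choose_lt_one {n k : ℕ}
    (h : n * log n < n.choose k / k !) : (n ! : ℝ) * (1 - 1 / k !) ^ n.choose k < 1 := by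
  have hbase : 0 ≤ 1 - 1 / (k ! : ℝ) :=
    sub_nonneg.2 (div_le_one_of_le₀ (by exact_mod_cast k.factorial_pos) (by positivity))
  have hfact : (n ! : ℝ) ≤ exp (n * log n) := by
    rw [← log_pow, exp_log (by exact_mod_cast Nat.pow_self_pos)]
    exact_mod_cast n.factorial_le_pow
  have hpow : (1 - 1 / (k ! : ℝ)) ^ n.choose k ≤ exp (-(n.choose k / k !)) := by
    calc (1 - 1 / (k ! : ℝ)) ^ n.choose k ≤ exp (-(1 / k !)) ^ n.choose k := by
          gcongr; exact one_sub_le_exp_neg _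
      _ = exp (-(n.choose k / k !)) := by rw [← exp_nat_mul]; ring_nf
  calc (n ! : ℝ) * (1 - 1 / k !) ^ n.choose k ≤ exp (n * log n) * exp (-(n.choose k / k !)) :=
        mul_le_mul hfact hpow (pow_nonneg hbase _) (exp_pos _).le
    _ = exp (n * log n - n.choose k / k !) := by rw [← exp_add, sub_eq_add_neg]
    _ < 1 := exp_lt_one_iff.2 (by linarith)

noncomputable def weight (k : ℕ) : ℝ := π * exp (exp 1 ^ 2 / 2) * k ^ 3 * log k

/-- The statement's `n` is `⌊threshold k⌋₊`. -/
noncomputable def threshold (k : ℕ) : ℝ := ((k : ℝ) / exp 1) ^ 2 * weight k ^ (1 / (k : ℝ))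

lemma one_le_weight {k : ℕ} (hk : 3 ≤ k) : 1 ≤ weight k := by
  have hk3 : (3 : ℝ) ≤ k := by exact_mod_cast hk
  have hlog : 1 ≤ log k := by
    rw [le_log_iff_exp_le (by linarith)]
    linarith [exp_one_lt_d9]
  have hpi : 1 ≤ π := by linarith [pi_gt_three]
  have hk1 : (1 : ℝ) ≤ k ^ 3 := one_le_pow₀ (by linarith)
  unfold weight
  refine one_le_mul_of_one_le_of_one_le (one_le_mul_of_one_le_of_one_le
    (one_le_mul_of_one_le_of_one_le hpi (one_le_exp (by positivity))) hk1) hlog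

lemma threshold_eq {k : ℕ} (hk : 3 ≤ k) :
    threshold k = ((k : ℝ) / exp 1) ^ 2 * exp (log (weight k) / k) := by
  rw [threshold, rpow_def_of_pos (by linarith [one_le_weight hk]), mul_one_div]

lemma log_threshold {k : ℕ} (hk : 3 ≤ k) :
    log (threshold k) = 2 * log k - 2 + log (weight k) / k := by
  have hk0 : (0 : ℝ) < k := by exact_mod_cast (by omega : 0 < k)
  rw [threshold_eq hk, log_mul (by positivity) (exp_pos _).ne', log_exp, log_pow,
    log_div hk0.ne' (exp_pos _).ne', log_exp]
  push_cast
  ring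

lemma threshold_pow {k : ℕ} (hk : 3 ≤ k) :
    threshold k ^ k = ((k : ℝ) / exp 1) ^ (2 * k) * weight k := by
  have hk0 : (k : ℝ) ≠ 0 := by exact_mod_cast (by omega : k ≠ 0)
  rw [threshold_eq hk, mul_pow, ← pow_mul, ← exp_nat_mul, mul_div_cancel₀ _ hk0,
    exp_log (by linarith [one_le_weight hk])]

lemma sq_div_le_threshold {k : ℕ} (hk : 3 ≤ k) : ((k : ℝ) / exp 1) ^ 2 ≤ threshold k := by
  rw [threshold_eq hk]
  refine le_mul_of_one_le_right (by positivity) (one_le_exp ?_)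
  exact div_nonneg (log_nonneg (one_le_weight hk)) k.cast_nonneg

lemma two_mul_le_threshold {k : ℕ} (hk : 15 ≤ k) : 2 * (k : ℝ) ≤ threshold k := by
  have hk15 : (15 : ℝ) ≤ k := by exact_mod_cast hk
  have he : exp 1 ^ 2 < 15 / 2 := by nlinarith [exp_one_lt_d9, exp_pos 1]
  refine le_trans ?_ (sq_div_le_threshold (by omega))
  rw [div_pow, le_div_iff₀ (by positivity)]
  nlinarith

lemma tendsto_log_weight_div : Tendsto (fun k : ℕ => log (weight k) / k) atTop (𝓝 0) := by
  set C := π * exp (exp 1 ^ 2 / 2)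
  have hC : 0 < C := by positivity
  have hupper : Tendsto (fun k : ℕ => log C / k + 4 * (log k / k)) atTop (𝓝 0) := by
    have h1 : Tendsto (fun k : ℕ => log C / k) atTop (𝓝 0) :=
      tendsto_const_nhds.div_atTop tendsto_natCast_atTop_atTop
    have h2 := (isLittleO_log_id_atTop.tendsto_div_nhds_zero.comp
      tendsto_natCast_atTop_atTop).const_mul 4
    simpa using h1.add h2
  refine tendsto_of_tendsto_of_tendsto_of_le_of_le' tendsto_const_nhds hupper ?_ ?_
  · filter_upwards [eventually_ge_atTop 3] with k hk
    exact div_nonneg (log_nonneg (one_le_weight hk)) k.cast_nonneg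
  · filter_upwards [eventually_ge_atTop 3] with k hk
    have hk3 : (3 : ℝ) ≤ k := by exact_mod_cast hk
    have hlogk : 0 < log k := log_pos (by linarith)
    have hlog : log (weight k) ≤ log C + 4 * log k := by
      rw [weight, log_mul (by positivity) hlogk.ne', log_mul hC.ne' (by positivity), log_pow]
      push_cast
      linarith [log_le_self hlogk.le]
    rw [← mul_div_assoc, ← add_div]
    gcongr

lemma tendsto_threshold_mul_log_div :
    Tendsto (fun k : ℕ => threshold k * log (threshold k) / (k ^ 2 * log k)) atTop
      (𝓝 (2 / exp 1 ^ 2)) := by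
  have hL := tendsto_log_weight_div
  have hinv : Tendsto (fun k : ℕ => (log k)⁻¹) atTop (𝓝 0) :=
    tendsto_inv_atTop_zero.comp (tendsto_log_atTop.comp tendsto_natCast_atTop_atTop)
  have hlim := (((continuous_exp.tendsto 0).comp hL).div_const (exp 1 ^ 2)).mul
    ((tendsto_const_nhds (x := (2 : ℝ))).sub (hinv.const_mul 2) |>.add (hL.mul hinv))
  simp only [exp_zero, mul_zero, sub_zero, add_zero, one_div] at hlim
  rw [div_eq_inv_mul]
  refine hlim.congr' ?_
  filter_upwards [eventually_ge_atTop 3] with k hk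
  have hk3 : (3 : ℝ) ≤ k := by exact_mod_cast hk
  have hlogk : 0 < log k := log_pos (by linarith)
  simp only [Function.comp_apply]
  rw [log_threshold hk, threshold_eq hk]
  field_simp

lemma pi_mul_exp_mul_le_choose_div_factorial {k n : ℕ} (hk : 15 ≤ k)
    (hn : threshold k < n + 1) :
    π * exp (-(120 / k)) / exp 1 ^ 2 * (k ^ 2 * log k) ≤ n.choose k / k ! := by
  set m := threshold k
  have hk15 : (15 : ℝ) ≤ k := by exact_mod_cast hk
  have hm2 : 2 * (k : ℝ) ≤ m := two_mul_le_threshold hk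
  have hmk : (k : ℝ) ^ 2 / exp 1 ^ 2 ≤ m := by
    simpa only [div_pow] using sq_div_le_threshold (by omega)
  -- `e² / 2 + 2 e⁴ < 120`
  have hexponent :
      k * (k + 1) / (2 * m) + 2 * k ^ 3 / m ^ 2 ≤ exp 1 ^ 2 / 2 + 120 / (k : ℝ) := by
    have h1 : k * (k + 1) / (2 * m) ≤ exp 1 ^ 2 / 2 + exp 1 ^ 2 / 2 / (k : ℝ) :=
      calc k * (k + 1) / (2 * m) ≤ k * (k + 1) / (2 * ((k : ℝ) ^ 2 / exp 1 ^ 2)) := by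
            gcongr
        _ = exp 1 ^ 2 / 2 + exp 1 ^ 2 / 2 / (k : ℝ) := by field_simp
    have h2 : 2 * k ^ 3 / m ^ 2 ≤ 2 * exp 1 ^ 4 / (k : ℝ) :=
      calc 2 * k ^ 3 / m ^ 2 ≤ 2 * (k : ℝ) ^ 3 / ((k : ℝ) ^ 2 / exp 1 ^ 2) ^ 2 := by gcongr
        _ = 2 * exp 1 ^ 4 / (k : ℝ) := by field_simp
    have h3 : exp 1 ^ 2 / 2 / (k : ℝ) + 2 * exp 1 ^ 4 / (k : ℝ) ≤ 120 / (k : ℝ) := by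
      rw [← add_div]
      gcongr
      have he : exp 1 ^ 2 < 15 / 2 := by nlinarith [exp_one_lt_d9, exp_pos 1]
      nlinarith [pow_pos (exp_pos 1) 2]
    linarith
  have hdesc : m ^ k * exp (-(exp 1 ^ 2 / 2 + 120 / (k : ℝ))) ≤ n.descFactorial k :=
    calc m ^ k * exp (-(exp 1 ^ 2 / 2 + 120 / (k : ℝ)))
        ≤ m ^ k * exp (-(k * (k + 1) / (2 * m) + 2 * k ^ 3 / m ^ 2)) := by
          have : 0 ≤ m := by linarith
          gcongr
      _ ≤ ∏ i ∈ range k, (m - (i + 1)) := pow_mul_exp_le_prod_sub hm2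
      _ ≤ n.descFactorial k := prod_sub_le_descFactorial (by linarith) hn
  have hfact : (k ! : ℝ) ^ 2 ≤ exp 1 ^ 2 * k * (k / exp 1) ^ (2 * k) :=
    calc (k ! : ℝ) ^ 2 ≤ (exp 1 * √k * (k / exp 1) ^ k) ^ 2 := by
          gcongr; exact factorial_le_exp_one_mul_sqrt_mul_pow (by omega)
      _ = exp 1 ^ 2 * k * (k / exp 1) ^ (2 * k) := by
          rw [mul_pow, mul_pow, sq_sqrt k.cast_nonneg, ← pow_mul, Nat.mul_comm k 2]
  calc π * exp (-(120 / k)) / exp 1 ^ 2 * (k ^ 2 * log k)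
      = m ^ k * exp (-(exp 1 ^ 2 / 2 + 120 / (k : ℝ))) /
          (exp 1 ^ 2 * k * (k / exp 1) ^ (2 * k)) := by
        rw [threshold_pow (by omega), weight, neg_add, exp_add, exp_neg (exp 1 ^ 2 / 2)]
        field_simp
    _ ≤ n.descFactorial k / (k ! : ℝ) ^ 2 :=
        div_le_div₀ (Nat.cast_nonneg _) hdesc (by positivity) hfact
    _ = n.choose k / k ! := by
        rw [Nat.descFactorial_eq_factorial_mul_choose, Nat.cast_mul]
        field_simp

/-- For all sufficiently large `k`, with
`n = ⌊(k/e)²·(π·e^{e²/2}·k³·ln k)^{1/k}⌋`, one has `n!·(1 − 1/k!)^{C(n,k)} < 1`. -/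
theorem factorial_mul_pow_lt_one :
    ∃ k₀ : ℕ, ∀ k : ℕ, k₀ ≤ k →
      ∀ n : ℕ, n = ⌊((k : ℝ) / Real.exp 1) ^ 2 *
          (Real.pi * Real.exp (Real.exp 1 ^ 2 / 2) * (k : ℝ) ^ 3 * Real.log k)
            ^ (1 / (k : ℝ))⌋₊ →
        (n.factorial : ℝ) * (1 - 1 / (k.factorial : ℝ)) ^ n.choose k < 1 := by
  have hbound : Tendsto (fun k : ℕ => π * exp (-(120 / k)) / exp 1 ^ 2) atTop
      (𝓝 (π / exp 1 ^ 2)) := by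
    have h0 : Tendsto (fun k : ℕ => -(120 / (k : ℝ))) atTop (𝓝 0) := by
      simpa using ((tendsto_const_nhds (x := (120 : ℝ))).div_atTop
        tendsto_natCast_atTop_atTop).neg
    have h := (((continuous_exp.tendsto 0).comp h0).const_mul π).div_const (exp 1 ^ 2)
    rwa [exp_zero, mul_one] at h
  have hlt : 2 / exp 1 ^ 2 < π / exp 1 ^ 2 := by gcongr; linarith [pi_gt_three]
  obtain ⟨k₀, hk₀⟩ := ((tendsto_threshold_mul_log_div.eventually_lt hbound hlt).and
    (eventually_ge_atTop 15)).exists_forall_of_atTop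
  refine ⟨k₀, fun k hk n hn => factorial_mul_one_sub_inv_pow_choose_lt_one ?_⟩
  obtain ⟨hratio, hk15⟩ := hk₀ k hk
  replace hn : n = ⌊threshold k⌋₊ := hn
  have hm := two_mul_le_threshold hk15
  have hk3 : (3 : ℝ) ≤ k := by exact_mod_cast (by omega : 3 ≤ k)
  have hn1 : (1 : ℝ) ≤ n := by
    exact_mod_cast hn ▸ (Nat.one_le_floor_iff _).2 (by linarith : (1 : ℝ) ≤ threshold k)
  have hnm : (n : ℝ) ≤ threshold k := hn ▸ Nat.floor_le (by linarith)
  calc n * log n ≤ threshold k * log (threshold k) :=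
        mul_le_mul hnm (log_le_log (by linarith) hnm) (log_nonneg hn1) (by linarith)
    _ < π * exp (-(120 / k)) / exp 1 ^ 2 * (k ^ 2 * log k) :=
        (div_lt_iff₀ (by have := log_pos (by linarith : (1 : ℝ) < k); positivity)).1 hratio
    _ ≤ n.choose k / k ! :=
        pi_mul_exp_mul_le_choose_div_factorial hk15 (hn ▸ Nat.lt_floor_add_one _)
end

section
/- Let (n_k)_{k≥2} be a sequence of positive integers with n_k ≥ k for all k and n_k·e²/k² → 1 as k → ∞. Then the falling factorial satisfies (n_k)_k / (n_k)^k → e^{−e²/2} as k → ∞, where (n)_k = n(n−1)⋯(n−k+1). -/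
open Filter Finset

private lemma log_one_sub_lb {x : ℝ} (hx2 : x ≤ 1/2) :
    -x - 2*x^2 ≤ Real.log (1 - x) := by
  have h1 : (0:ℝ) < 1 - x := by linarith
  have h2 : Real.log (1 - x) = - Real.log (1 - x)⁻¹ := by
    rw [Real.log_inv]; ring
  have h3 : Real.log (1-x)⁻¹ ≤ (1-x)⁻¹ - 1 :=
    Real.log_le_sub_one_of_pos (by positivity)
  have h4 : (1-x)⁻¹ ≤ 1 + x + 2*x^2 := by
    rw [inv_eq_one_div, div_le_iff₀ h1]
    nlinarith
  linarith

private lemma sum_range_id_real (k : ℕ) :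
    (∑ i ∈ Finset.range k, (i:ℝ)) = k*((k:ℝ)-1)/2 := by
  induction k with
  | zero => simp
  | succ m ih => rw [Finset.sum_range_succ, ih]; push_cast; ring


/-- if `(n_k)` is a sequence of positive integers with `n_k ≥ k` and
`n_k e²/k² → 1`, then the falling factorial satisfies `(n_k)_k / n_k^k → e^{−e²/2}`. -/
theorem descFactorial_asymptotics (n : ℕ → ℕ) (hpos : ∀ k, 0 < n k)
    (hge : ∀ k, 2 ≤ k → k ≤ n k)
    (hlim : Filter.Tendsto (fun k : ℕ => (n k : ℝ) * Real.exp 1 ^ 2 / (k : ℝ) ^ 2)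
      Filter.atTop (nhds 1)) :
    Filter.Tendsto
      (fun k : ℕ => ((n k).descFactorial k : ℝ) / (n k : ℝ) ^ k)
      Filter.atTop (nhds (Real.exp (-(Real.exp 1 ^ 2) / 2))) := by
  have he : (Real.exp 1 : ℝ) ≠ 0 := Real.exp_ne_zero 1
  have hn0 : ∀ k, (n k : ℝ) ≠ 0 := fun k => by exact_mod_cast (hpos k).ne'
  have hnpos : ∀ k, (0:ℝ) < (n k : ℝ) := fun k => by exact_mod_cast hpos k
  -- k²/n → e²
  have h1 : Tendsto (fun k : ℕ => (k:ℝ)^2/(n k : ℝ)) atTop (nhds (Real.exp 1 ^ 2)) := by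
    have hinv : Tendsto (fun k : ℕ => ((n k : ℝ) * Real.exp 1 ^ 2 / (k:ℝ)^2)⁻¹) atTop (nhds 1) := by
      simpa using hlim.inv₀ one_ne_zero
    have h2 := hinv.mul_const (Real.exp 1 ^ 2)
    rw [one_mul] at h2
    apply h2.congr
    intro k
    rcases Nat.eq_zero_or_pos k with hk | hk
    · subst hk; simp
    · have he2 : Real.exp 1 ^ 2 ≠ 0 := pow_ne_zero _ he
      rw [inv_div, div_mul_eq_mul_div, mul_div_mul_right _ _ he2]
  have hrecip : Tendsto (fun k : ℕ => 1/(k:ℝ)) atTop (nhds 0) :=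
    tendsto_one_div_atTop_nhds_zero_nat
  have hev1 : ∀ᶠ k : ℕ in atTop, 1 ≤ k := eventually_ge_atTop 1
  -- k/n → 0
  have hkn : Tendsto (fun k : ℕ => (k:ℝ)/(n k : ℝ)) atTop (nhds 0) := by
    have h2 := h1.mul hrecip
    rw [mul_zero] at h2
    apply h2.congr'
    filter_upwards [hev1] with k hk
    have hk0 : (k:ℝ) ≠ 0 := by positivity
    have hnk0 := hn0 k
    field_simp
  -- A_k := k(k-1)/(2 n_k) → e²/2
  have hA : Tendsto (fun k : ℕ => (k:ℝ)*((k:ℝ)-1)/(2*(n k : ℝ))) atTop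
      (nhds (Real.exp 1 ^ 2 / 2)) := by
    have hhalf : Tendsto (fun k : ℕ => ((k:ℝ)-1)/(2*(k:ℝ))) atTop (nhds (1/2)) := by
      have h2 : Tendsto (fun k : ℕ => (1 - 1/(k:ℝ))/2) atTop (nhds ((1-0)/2)) :=
        (tendsto_const_nhds.sub hrecip).div_const 2
      norm_num at h2
      apply h2.congr'
      filter_upwards [hev1] with k hk
      have hk0 : (k:ℝ) ≠ 0 := by positivity
      rw [div_eq_div_iff (by norm_num) (by positivity)]
      field_simp

    have h2 := h1.mul hhalf
    have h3 : Real.exp 1 ^ 2 * (1/2) = Real.exp 1 ^ 2 / 2 := by ring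
    rw [h3] at h2
    apply h2.congr'
    filter_upwards [hev1] with k hk
    have hk0 : (k:ℝ) ≠ 0 := by positivity
    have hnk0 := hn0 k
    field_simp
  -- E_k := 2k³/n² → 0
  have hE : Tendsto (fun k : ℕ => 2*(k:ℝ)^3/(n k : ℝ)^2) atTop (nhds 0) := by
    have h2 := ((h1.mul h1).const_mul 2).mul hrecip
    rw [mul_zero] at h2
    apply h2.congr'
    filter_upwards [hev1] with k hk
    have hk0 : (k:ℝ) ≠ 0 := by positivity
    have hnk0 := hn0 k
    field_simp
  -- eventually i/n ≤ 1/2 for all i < k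
  have hsmall : ∀ᶠ k : ℕ in atTop, (k:ℝ)/(n k : ℝ) < 1/2 :=
    hkn.eventually (eventually_lt_nhds (by norm_num : (0:ℝ) < 1/2))
  set f : ℕ → ℝ := fun k => ∑ i ∈ Finset.range k, Real.log (1 - (i:ℝ)/(n k : ℝ)) with hf_def
  have hev2 : ∀ᶠ k : ℕ in atTop, 2 ≤ k := eventually_ge_atTop 2
  -- upper bound
  have hupper : ∀ᶠ k : ℕ in atTop, f k ≤ -((k:ℝ)*((k:ℝ)-1)/(2*(n k : ℝ))) := by
    filter_upwards [hev2] with k hk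
    have hterm : ∀ i ∈ Finset.range k, Real.log (1 - (i:ℝ)/(n k : ℝ)) ≤ -((i:ℝ)/(n k : ℝ)) := by
      intro i hi
      have hik : i < k := Finset.mem_range.mp hi
      have hlt : (i:ℝ) < (n k : ℝ) := by exact_mod_cast lt_of_lt_of_le hik (hge k hk)
      have hp : (0:ℝ) < 1 - (i:ℝ)/(n k : ℝ) := by
        rw [sub_pos, div_lt_one (hnpos k)]; exact hlt
      have := Real.log_le_sub_one_of_pos hp
      linarith
    have h2 : f k ≤ ∑ i ∈ Finset.range k, -((i:ℝ)/(n k : ℝ)) := Finset.sum_le_sum hterm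
    have h3 : ∑ i ∈ Finset.range k, -((i:ℝ)/(n k : ℝ))
        = -((k:ℝ)*((k:ℝ)-1)/(2*(n k : ℝ))) := by
      rw [Finset.sum_neg_distrib, ← Finset.sum_div, sum_range_id_real, div_div]
    linarith
  -- lower bound
  have hlower : ∀ᶠ k : ℕ in atTop,
      -((k:ℝ)*((k:ℝ)-1)/(2*(n k : ℝ))) - 2*(k:ℝ)^3/(n k : ℝ)^2 ≤ f k := by
    filter_upwards [hev2, hsmall] with k hk hs
    have hterm : ∀ i ∈ Finset.range k,
        -((i:ℝ)/(n k : ℝ)) - 2*((i:ℝ)/(n k : ℝ))^2 ≤ Real.log (1 - (i:ℝ)/(n k : ℝ)) := by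
      intro i hi
      have hik : i < k := Finset.mem_range.mp hi
      have hile : (i:ℝ) ≤ (k:ℝ) := by exact_mod_cast hik.le
      have hx2 : (i:ℝ)/(n k : ℝ) ≤ 1/2 := by
        have : (i:ℝ)/(n k : ℝ) ≤ (k:ℝ)/(n k : ℝ) := by gcongr
        linarith
      exact log_one_sub_lb hx2
    have h2 : ∑ i ∈ Finset.range k, (-((i:ℝ)/(n k : ℝ)) - 2*((i:ℝ)/(n k : ℝ))^2) ≤ f k :=
      Finset.sum_le_sum hterm
    have h3 : ∑ i ∈ Finset.range k, (-((i:ℝ)/(n k : ℝ)) - 2*((i:ℝ)/(n k : ℝ))^2)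
        = -((∑ i ∈ Finset.range k, (i:ℝ))/(n k : ℝ))
          - 2*(∑ i ∈ Finset.range k, (i:ℝ)^2)/(n k : ℝ)^2 := by
      rw [Finset.sum_sub_distrib, Finset.sum_neg_distrib, ← Finset.sum_div]
      congr 1
      rw [Finset.mul_sum, Finset.sum_div]
      apply Finset.sum_congr rfl
      intro i _
      rw [div_pow]
      ring
    have hsq : (∑ i ∈ Finset.range k, (i:ℝ)^2) ≤ (k:ℝ)^3 := by
      calc (∑ i ∈ Finset.range k, (i:ℝ)^2) ≤ ∑ i ∈ Finset.range k, (k:ℝ)^2 := by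
            apply Finset.sum_le_sum
            intro i hi
            have h4 : (i:ℝ) ≤ (k:ℝ) := by exact_mod_cast (Finset.mem_range.mp hi).le
            have h5 : (0:ℝ) ≤ (i:ℝ) := Nat.cast_nonneg i
            nlinarith
        _ = (k:ℝ)^3 := by
            rw [Finset.sum_const, Finset.card_range, nsmul_eq_mul]
            ring
    have h6 : (∑ i ∈ Finset.range k, (i:ℝ)) = (k:ℝ)*((k:ℝ)-1)/2 := sum_range_id_real k
    have h7 : 2*(∑ i ∈ Finset.range k, (i:ℝ)^2)/(n k : ℝ)^2 ≤ 2*(k:ℝ)^3/(n k : ℝ)^2 := by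
      gcongr
    have h8 : -(((k:ℝ)*((k:ℝ)-1)/2)/(n k : ℝ)) = -((k:ℝ)*((k:ℝ)-1)/(2*(n k : ℝ))) := by
      ring
    rw [h3, h6] at h2
    linarith [h2, h7]
  -- f → -(e²/2)
  have hf : Tendsto f atTop (nhds (-(Real.exp 1 ^ 2 / 2))) := by
    have hlow : Tendsto (fun k : ℕ =>
        -((k:ℝ)*((k:ℝ)-1)/(2*(n k : ℝ))) - 2*(k:ℝ)^3/(n k : ℝ)^2) atTop
        (nhds (-(Real.exp 1 ^ 2 / 2))) := by
      have h9 := hA.neg.sub hE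
      rw [sub_zero] at h9
      exact h9
    exact tendsto_of_tendsto_of_tendsto_of_le_of_le' hlow hA.neg hlower hupper
  -- conclude
  have hexp : Tendsto (fun k : ℕ => Real.exp (f k)) atTop
      (nhds (Real.exp (-(Real.exp 1 ^ 2 / 2)))) :=
    (Real.continuous_exp.tendsto _).comp hf
  have hfin : -(Real.exp 1 ^ 2) / 2 = -(Real.exp 1 ^ 2 / 2) := by ring
  rw [hfin]
  apply hexp.congr'
  filter_upwards [hev2] with k hk
  have hnk : k ≤ n k := hge k hk
  rw [hf_def, Real.exp_sum]
  calc (∏ i ∈ Finset.range k, Real.exp (Real.log (1 - (i:ℝ)/(n k : ℝ))))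
      = ∏ i ∈ Finset.range k, (((n k - i : ℕ):ℝ) / (n k : ℝ)) := by
        apply Finset.prod_congr rfl
        intro i hi
        have hik : i < k := Finset.mem_range.mp hi
        have hin : i ≤ n k := le_trans hik.le hnk
        have hlt : (i:ℝ) < (n k : ℝ) := by exact_mod_cast lt_of_lt_of_le hik hnk
        have hp : (0:ℝ) < 1 - (i:ℝ)/(n k : ℝ) := by
          rw [sub_pos, div_lt_one (hnpos k)]; exact hlt
        rw [Real.exp_log hp, Nat.cast_sub hin, sub_div, div_self (hn0 k)]
    _ = (∏ i ∈ Finset.range k, ((n k - i : ℕ):ℝ)) / (n k : ℝ)^k := by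
        rw [Finset.prod_div_distrib, Finset.prod_const, Finset.card_range]
    _ = ((n k).descFactorial k : ℝ) / (n k : ℝ)^k := by
        rw [Nat.descFactorial_eq_prod_range, Nat.cast_prod]
end

section
/- For every α with 0 < α < 1 there exists a sequence of positive integers (n_k) with n_k / ((cα)^{1/k}·(k/e)²·k^{3/(2k)}) → 1 as k → ∞, where c = 2π/e^{1+e²/2}, and a k_0 such that for all k ≥ k_0, the number of k-tournaments on the vertex set {1, …, n_k} that have Property O is at most α·(k!)^{C(n_k,k)} (equivalently, at least a (1−α) fraction of all k-tournaments on n_k vertices fail to have Property O). -/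
/-!
A tournament with Property O has, in particular, an edge that is increasing for the natural order
of the vertices. A union bound over the `N = C(n, k)` possible `k`-sets shows that at most
`N (k!)^(N-1)` tournaments do, so it suffices to have `C(n, k) ≤ α k!`. Since `C(n, k) ≤ n^k / k!`,
this holds for `n = ⌊(α (k!)²)^(1/k)⌋`, and by Stirling's formula `(k!)^(1/k) ~ k / e`, while
constants and powers of `k` raised to `1/k` tend to `1`; so this `n` has the required asymptotics.
-/

open Finset Filter Topology Real
open scoped Nat

-- The union bound over `i`; the factor `q` on the left avoids the truncated exponent `card ι - 1`.
theorem card_exists_apply_eq_mul_le {ι : Type*} [Finite ι] {β : ι → Type*} [∀ i, Finite (β i)]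
    {q : ℕ} (hq : ∀ i, Nat.card (β i) = q) (m : ∀ i, β i) :
    Nat.card {g : ∀ i, β i // ∃ i, g i = m i} * q ≤ Nat.card ι * q ^ Nat.card ι := by
  classical
  have := Fintype.ofFinite ι
  have := fun i => Fintype.ofFinite (β i)
  simp only [Nat.card_eq_fintype_card] at hq ⊢
  have hfiber : ∀ i, #{g : ∀ i, β i | g i = m i} = q ^ (Fintype.card ι - 1) := fun i => by
    have := Fintype.card_filter_piFinset_eq_of_mem (fun i => univ) i (mem_univ (m i))
    rw [Fintype.piFinset_univ] at this
    simp [this, hq, card_erase_of_mem]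
  have hunion : Fintype.card {g : ∀ i, β i // ∃ i, g i = m i} ≤
      Fintype.card ι * q ^ (Fintype.card ι - 1) := by
    calc Fintype.card {g : ∀ i, β i // ∃ i, g i = m i}
        = #(univ.biUnion fun i => {g : ∀ i, β i | g i = m i}) := by
          rw [Fintype.card_subtype]; congr 1; ext g; simp
      _ ≤ _ := card_biUnion_le.trans (by simp [hfiber])
  calc _ ≤ Fintype.card ι * q ^ (Fintype.card ι - 1) * q := Nat.mul_le_mul_right _ hunion
    _ = _ := by
      obtain h | h := eq_or_ne (Fintype.card ι) 0
      · simp [h]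
      · rw [mul_assoc, pow_sub_one_mul h]

noncomputable def embeddingRangeEquiv {α V : Type*} (s : Set V) :
    {e : α ↪ V // Set.range e = s} ≃ (α ≃ s) where
  toFun e := (Equiv.ofInjective e.1 e.1.injective).trans (Equiv.setCongr e.2)
  invFun f := ⟨f.toEmbedding.trans (Function.Embedding.subtype _), by
    simp [Function.Embedding.trans, f.surjective.range_comp]⟩
  left_inv e := by ext; rfl
  right_inv f := by ext; rfl

theorem card_embedding_range_eq {k : ℕ} {V : Type*} {S : Finset V} (hS : S.card = k) :
    Nat.card {e : Fin k ↪ V // Set.range e = S} = k ! := by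
  classical
  rw [Nat.card_congr (embeddingRangeEquiv _), Nat.card_eq_fintype_card,
    Fintype.card_equiv (Fintype.equivFinOfCardEq (by simp [hS])).symm, Fintype.card_fin]

namespace IsTournament

variable {k : ℕ} {V : Type*} {H : OrientedHypergraph k V}

noncomputable def edge (hH : IsTournament H) (S : {S : Finset V // S.card = k}) :
    {e : Fin k ↪ V // Set.range e = S} :=
  ⟨(hH S S.2).choose, (hH S S.2).choose_spec.2⟩

theorem edge_mem (hH : IsTournament H) (S : {S : Finset V // S.card = k}) :
    (hH.edge S).1 ∈ H.edges :=
  (hH S S.2).choose_spec.1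

theorem edge_eq_of_mem (hH : IsTournament H) {S : {S : Finset V // S.card = k}} {e : Fin k ↪ V}
    (he : e ∈ H.edges) (hS : Set.range e = S) : (hH.edge S).1 = e :=
  H.eq_of_range_eq _ (hH.edge_mem S) _ he ((hH.edge S).2.trans hS.symm)

theorem edges_subset_of_edge_eq {H' : OrientedHypergraph k V} (hH : IsTournament H)
    (hH' : IsTournament H') (h : hH.edge = hH'.edge) : H.edges ⊆ H'.edges := fun e he => by
  have hS : Set.range e = ↑(univ.map e) := by simp
  rw [← hH.edge_eq_of_mem (S := ⟨_, by simp⟩) he hS, h]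
  exact hH'.edge_mem _

theorem eq_of_edge_eq {H' : OrientedHypergraph k V} (hH : IsTournament H)
    (hH' : IsTournament H') (h : hH.edge = hH'.edge) : H = H' := by
  obtain ⟨E, _⟩ := H
  obtain ⟨E', _⟩ := H'
  congr
  exact (edges_subset_of_edge_eq hH hH' h).antisymm (edges_subset_of_edge_eq hH' hH h.symm)

theorem exists_edge_eq_orderEmbOfFin [LinearOrder V] (hH : IsTournament H) (hO : PropertyO H) :
    ∃ S, (hH.edge S).1 = (S.1.orderEmbOfFin S.2).toEmbedding := by
  obtain ⟨e, he, hmono⟩ := hO (· < ·) inferInstance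
  refine ⟨⟨univ.map e, by simp⟩, ?_⟩
  rw [hH.edge_eq_of_mem he (by simp)]
  ext i
  exact congrFun (orderEmbOfFin_unique (s := univ.map e) _ (fun i => by simp) hmono) i

end IsTournament

theorem card_isTournament_propertyO_mul_le (k : ℕ) (V : Type*) [Fintype V] [LinearOrder V] :
    Nat.card {H : OrientedHypergraph k V // IsTournament H ∧ PropertyO H} * k ! ≤
      (Fintype.card V).choose k * k ! ^ (Fintype.card V).choose k := by
  let increasing : ∀ S : {S : Finset V // S.card = k}, {e : Fin k ↪ V // Set.range e = S} :=
    fun S => ⟨(S.1.orderEmbOfFin S.2).toEmbedding, by simp⟩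
  let Φ : {H : OrientedHypergraph k V // IsTournament H ∧ PropertyO H} →
      {g : ∀ S, _ // ∃ S, g S = increasing S} := fun H =>
    ⟨H.2.1.edge, (H.2.1.exists_edge_eq_orderEmbOfFin H.2.2).imp fun _ h => Subtype.ext h⟩
  have hΦ : Function.Injective Φ := fun H H' h =>
    Subtype.ext (IsTournament.eq_of_edge_eq H.2.1 H'.2.1 (congrArg Subtype.val h))
  have hunion := card_exists_apply_eq_mul_le (fun S => card_embedding_range_eq S.2) increasing
  rw [Nat.card_eq_fintype_card (α := {S : Finset V // S.card = k}), Fintype.card_finset_len]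
    at hunion
  exact (Nat.mul_le_mul_right _ (Nat.card_le_card_of_injective Φ hΦ)).trans hunion

theorem tendsto_rpow_one_div_natCast {u : ℕ → ℝ} {L : ℝ} (hL : L ≠ 0)
    (hu : Tendsto u atTop (𝓝 L)) : Tendsto (fun k : ℕ => u k ^ (1 / (k : ℝ))) atTop (𝓝 1) := by
  simpa using hu.rpow tendsto_one_div_atTop_nhds_zero_nat (Or.inl hL)

theorem tendsto_natCast_rpow_div_mul (a : ℝ) {b : ℝ} (hb : b ≠ 0) :
    Tendsto (fun k : ℕ => (k : ℝ) ^ (a / (b * k))) atTop (𝓝 1) := by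
  simpa [Function.comp_def] using
    (tendsto_rpow_div_mul_add a b 0 hb.symm).comp tendsto_natCast_atTop_atTop

theorem tendsto_factorial_rpow_mul_exp_div :
    Tendsto (fun k : ℕ => (k ! : ℝ) ^ (1 / (k : ℝ)) * exp 1 / k) atTop (𝓝 1) := by
  set s : ℕ → ℝ := fun k => k ! / (√(2 * k * π) * (k / exp 1) ^ k)
  have hs : Tendsto s atTop (𝓝 1) :=
    (Asymptotics.isEquivalent_iff_tendsto_one (eventually_ne_atTop 0 |>.mono fun k hk => by
      positivity)).1 Stirling.factorial_isEquivalent_stirling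
  have hlim := (tendsto_rpow_one_div_natCast (by positivity) (hs.mul_const √(2 * π))).mul
    (tendsto_natCast_rpow_div_mul 1 two_ne_zero)
  rw [one_mul] at hlim
  refine hlim.congr' ?_
  filter_upwards [eventually_ne_atTop 0] with k hk
  have hk' : (0 : ℝ) < k := by positivity
  have hfact : (k ! : ℝ) = s k * √(2 * π) * (k : ℝ) ^ (1 / 2 : ℝ) * (k / exp 1) ^ k := by
    rw [← sqrt_eq_rpow]
    simp only [s]
    rw [mul_right_comm 2 (k : ℝ), sqrt_mul (by positivity)]
    field_simp
  calc (s k * √(2 * π)) ^ (1 / (k : ℝ)) * (k : ℝ) ^ (1 / (2 * k : ℝ))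
      = (s k * √(2 * π)) ^ (1 / (k : ℝ)) * ((k : ℝ) ^ (1 / 2 : ℝ)) ^ (1 / (k : ℝ)) *
          ((k / exp 1) ^ k) ^ (1 / (k : ℝ)) * exp 1 / k := by
        rw [← rpow_mul hk'.le, one_div (k : ℝ), pow_rpow_inv_natCast (by positivity) hk]
        field_simp
    _ = _ := by
        rw [hfact, mul_rpow (y := (k / exp 1) ^ k) (by positivity) (by positivity),
          mul_rpow (y := (k : ℝ) ^ (1 / 2 : ℝ)) (by positivity) (by positivity)]

theorem tendsto_factorial_sq_rpow_div {α β : ℝ} (hα : 0 < α) (hβ : 0 < β) :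
    Tendsto (fun k : ℕ => (α * (k ! : ℝ) ^ 2) ^ (1 / (k : ℝ)) /
      (β ^ (1 / (k : ℝ)) * ((k : ℝ) / exp 1) ^ 2 * (k : ℝ) ^ (3 / (2 * (k : ℝ))))) atTop (𝓝 1) := by
  have hlim := ((tendsto_rpow_one_div_natCast hα.ne' tendsto_const_nhds).mul
    (tendsto_factorial_rpow_mul_exp_div.pow 2)).div ((tendsto_rpow_one_div_natCast hβ.ne'
      tendsto_const_nhds).mul (tendsto_natCast_rpow_div_mul 3 two_ne_zero)) (by norm_num)
  simp only [one_pow, mul_one, div_one] at hlim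
  refine hlim.congr' ?_
  filter_upwards [eventually_ne_atTop 0] with k hk
  rw [Pi.div_apply, mul_rpow hα.le (by positivity), ← rpow_pow_comm (by positivity)]
  field_simp

theorem tendsto_rpow_mul_div_exp_sq_atTop {β : ℝ} (hβ : 0 < β) :
    Tendsto (fun k : ℕ => β ^ (1 / (k : ℝ)) * ((k : ℝ) / exp 1) ^ 2 * (k : ℝ) ^ (3 / (2 * (k : ℝ))))
      atTop atTop :=
  ((tendsto_rpow_one_div_natCast hβ.ne' tendsto_const_nhds).pos_mul_atTop one_pos
    ((tendsto_pow_atTop two_ne_zero).comp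
      (tendsto_natCast_atTop_atTop.atTop_div_const (exp_pos 1)))).atTop_mul_pos one_pos
    (tendsto_natCast_rpow_div_mul 3 two_ne_zero)

theorem tendsto_div_of_abs_sub_le {ι : Type*} {l : Filter ι} {f g h : ι → ℝ} {C : ℝ}
    (hfg : ∀ i, |f i - g i| ≤ C) (hg : Tendsto (fun i => g i / h i) l (𝓝 1))
    (hh : Tendsto h l atTop) : Tendsto (fun i => f i / h i) l (𝓝 1) := by
  have hsub : Tendsto (fun i => (f i - g i) / h i) l (𝓝 0) := by
    refine squeeze_zero_norm' ?_ ((tendsto_const_nhds (x := C)).div_atTop hh)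
    filter_upwards [hh.eventually_gt_atTop 0] with i hi
    rw [norm_div, Real.norm_of_nonneg hi.le]
    exact div_le_div_of_nonneg_right (hfg i) hi.le
  simpa [sub_div] using hg.add hsub

noncomputable def tournamentSize (α : ℝ) (k : ℕ) : ℕ :=
  max 1 ⌊(α * (k ! : ℝ) ^ 2) ^ (1 / (k : ℝ))⌋₊

theorem choose_tournamentSize_le {α : ℝ} (hα : 0 ≤ α) {k : ℕ} (hk : 2 ≤ k) :
    ((tournamentSize α k).choose k : ℝ) ≤ α * k ! := by
  have hA : ((α * (k ! : ℝ) ^ 2) ^ (1 / (k : ℝ))) ^ k = α * (k ! : ℝ) ^ 2 := by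
    rw [one_div, rpow_inv_natCast_pow (by positivity) (by omega)]
  set A := (α * (k ! : ℝ) ^ 2) ^ (1 / (k : ℝ))
  rcases le_total ⌊A⌋₊ 1 with h | h
  · rw [tournamentSize, max_eq_left h, Nat.choose_eq_zero_of_lt (by omega), Nat.cast_zero]
    positivity
  · calc ((tournamentSize α k).choose k : ℝ) ≤ (⌊A⌋₊ : ℝ) ^ k / k ! := by
          rw [tournamentSize, max_eq_right h]; exact Nat.choose_le_pow_div k _
      _ ≤ A ^ k / k ! := by gcongr; exact Nat.floor_le (by positivity)
      _ = α * k ! := by rw [hA]; field_simp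

theorem abs_tournamentSize_sub_le {α : ℝ} (hα : 0 ≤ α) (k : ℕ) :
    |(tournamentSize α k : ℝ) - (α * (k ! : ℝ) ^ 2) ^ (1 / (k : ℝ))| ≤ 1 := by
  set A := (α * (k ! : ℝ) ^ 2) ^ (1 / (k : ℝ))
  have hA : 0 ≤ A := by positivity
  rw [abs_sub_le_iff, tournamentSize, Nat.cast_max, Nat.cast_one]
  constructor
  · have := Nat.floor_le hA
    exact sub_le_iff_le_add.2 (max_le (by linarith) (by linarith))
  · linarith [Nat.lt_floor_add_one A, le_max_right (1 : ℝ) ⌊A⌋₊]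

theorem most_tournaments_fail_propertyO_general (α : ℝ) (h0 : 0 < α) :
    ∃ n : ℕ → ℕ, (∀ k, 0 < n k) ∧
      Filter.Tendsto
        (fun k : ℕ => (n k : ℝ) /
          ((2 * Real.pi / Real.exp (1 + Real.exp 1 ^ 2 / 2) * α) ^ (1 / (k : ℝ)) *
            ((k : ℝ) / Real.exp 1) ^ 2 * (k : ℝ) ^ (3 / (2 * (k : ℝ)))))
        Filter.atTop (nhds 1) ∧
      ∃ k₀ : ℕ, ∀ k : ℕ, k₀ ≤ k →
        (Nat.card {H : OrientedHypergraph k (Fin (n k)) //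
            IsTournament H ∧ PropertyO H} : ℝ)
          ≤ α * (k.factorial : ℝ) ^ (n k).choose k := by
  have hβ : 0 < 2 * π / exp (1 + exp 1 ^ 2 / 2) * α := by positivity
  refine ⟨tournamentSize α, fun _ => lt_max_of_lt_left one_pos, ?_, 2, fun k hk => ?_⟩
  · exact tendsto_div_of_abs_sub_le (abs_tournamentSize_sub_le h0.le)
      (tendsto_factorial_sq_rpow_div h0 hβ) (tendsto_rpow_mul_div_exp_sq_atTop hβ)
  · have hcount := card_isTournament_propertyO_mul_le k (Fin (tournamentSize α k))
    rw [Fintype.card_fin] at hcount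
    have hchoose := choose_tournamentSize_le h0.le hk
    set N := (tournamentSize α k).choose k
    have hfact : (0 : ℝ) < k ! := by positivity
    refine le_of_mul_le_mul_right ?_ hfact
    calc _ ≤ (N : ℝ) * (k ! : ℝ) ^ N := by exact_mod_cast hcount
      _ ≤ α * k ! * (k ! : ℝ) ^ N := by gcongr
      _ = _ := by ring

/-- for every `0 < α < 1` there is a sequence of positive integers
`(n_k)` with `n_k / ((cα)^{1/k}·(k/e)²·k^{3/(2k)}) → 1`, where
`c = 2π/e^{1+e²/2}`, and a `k₀` such that for all `k ≥ k₀` the number of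
`k`-tournaments on `n_k` vertices with Property O is at most `α·(k!)^{C(n_k,k)}`. -/
theorem most_tournaments_fail_propertyO (α : ℝ) (h0 : 0 < α) (h1 : α < 1) :
    ∃ n : ℕ → ℕ, (∀ k, 0 < n k) ∧
      Filter.Tendsto
        (fun k : ℕ => (n k : ℝ) /
          ((2 * Real.pi / Real.exp (1 + Real.exp 1 ^ 2 / 2) * α) ^ (1 / (k : ℝ)) *
            ((k : ℝ) / Real.exp 1) ^ 2 * (k : ℝ) ^ (3 / (2 * (k : ℝ)))))
        Filter.atTop (nhds 1) ∧
      ∃ k₀ : ℕ, ∀ k : ℕ, k₀ ≤ k →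
        (Nat.card {H : OrientedHypergraph k (Fin (n k)) //
            IsTournament H ∧ PropertyO H} : ℝ)
          ≤ α * (k.factorial : ℝ) ^ (n k).choose k :=
  most_tournaments_fail_propertyO_general α h0
end

section
/- Let k ≥ 2 and let G = (V, E) be an oriented k-uniform hypergraph with Property O. Then there exists an oriented (k+1)-uniform hypergraph with Property O on a vertex set of size 3·|V| having exactly 4·|E|·|V| edges. -/
/-!
Put the copies `X, Y, Z` of `V` as `{0} × V, {1} × V, {2} × V` inside `Fin 3 × V`. Given a linear
order, Property O of `G` yields consistent edges `x̄, ȳ, z̄` in the three copies; compare their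
last entries `a, b, c`. If `a < b`, then `(x̄, b) ∈ T₄` is consistent; otherwise, if `b < c`, then
`(ȳ, c) ∈ T₃` is; otherwise `c < b < a` and `(z̄, a) ∈ T₂` is. An edge `(x, ȳ)` of any class is
determined by its underlying set, because the copy holding at least two of its vertices is that
of `ȳ`; so the four classes are disjoint and the new hypergraph is oriented with `4·|E|·|V|`
edges.
-/

section

open Function Function.Embedding Set

variable {k : ℕ} {ι V W : Type*}

theorem Consistent.snoc {n : ℕ} {r : W → W → Prop} [IsTrans W r] {f : Fin (n + 1) ↪ W}
    {a : W} {ha : a ∉ range f} (hf : Consistent r f) (hlast : r (f (Fin.last n)) a) :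
    Consistent r (Fin.Embedding.snoc f ha) := by
  have hle : ∀ i, r (f i) a := fun i => by
    rcases (Fin.le_last i).lt_or_eq with hi | rfl
    · exact _root_.trans (hf _ _ hi) hlast
    · exact hlast
  intro i j hij
  induction j using Fin.lastCases with
  | last =>
    obtain ⟨i, rfl⟩ := Fin.exists_castSucc_eq.2 hij.ne
    simpa only [Fin.Embedding.snoc_castSucc, Fin.Embedding.snoc_last] using hle i
  | cast j =>
    obtain ⟨i, rfl⟩ := Fin.exists_castSucc_eq.2 (hij.trans (Fin.castSucc_lt_last j)).ne
    simpa only [Fin.Embedding.snoc_castSucc] using hf _ _ (Fin.castSucc_lt_castSucc_iff.1 hij)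

theorem range_trans_sectR (q : ι) (f : Fin k ↪ V) :
    range ⇑(f.trans (sectR q V)) = {q} ×ˢ range f := by
  ext ⟨t, v⟩
  simp [eq_comm]

theorem mk_notMem_range_trans_sectR {p q : ι} (hpq : p ≠ q) (x : V) (f : Fin k ↪ V) :
    (p, x) ∉ range ⇑(f.trans (sectR q V)) := by
  simp [range_trans_sectR, hpq]

def consApex {p q : ι} (hpq : p ≠ q) (x : V) (f : Fin k ↪ V) : Fin (k + 1) ↪ ι × V :=
  Fin.Embedding.cons (f.trans (sectR q V)) (mk_notMem_range_trans_sectR hpq x f)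

def snocApex {p q : ι} (hpq : p ≠ q) (f : Fin k ↪ V) (x : V) : Fin (k + 1) ↪ ι × V :=
  Fin.Embedding.snoc (f.trans (sectR q V)) (mk_notMem_range_trans_sectR hpq x f)

theorem range_consApex {p q : ι} (hpq : p ≠ q) (x : V) (f : Fin k ↪ V) :
    range ⇑(consApex hpq x f) = insert (p, x) ({q} ×ˢ range f) := by
  rw [consApex, Fin.Embedding.coe_cons, Fin.range_cons, range_trans_sectR]

theorem range_snocApex {p q : ι} (hpq : p ≠ q) (f : Fin k ↪ V) (x : V) :
    range ⇑(snocApex hpq f x) = insert (p, x) ({q} ×ˢ range f) := by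
  rw [snocApex, Fin.Embedding.coe_snoc, Fin.range_snoc, range_trans_sectR]

theorem Consistent.snocApex {n : ℕ} {r : ι × V → ι × V → Prop} [IsTrans (ι × V) r] {p q : ι}
    (hpq : p ≠ q) {f : Fin (n + 1) ↪ V} {x : V} (hf : Consistent r (f.trans (sectR q V)))
    (hlast : r (q, f (Fin.last n)) (p, x)) : Consistent r (snocApex hpq f x) :=
  hf.snoc (ha := mk_notMem_range_trans_sectR hpq x f) hlast

theorem eq_of_insert_singleton_prod_eq {p q p' q' : ι} {x x' : V} {S S' : Set V} (hpq : p ≠ q)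
    (hpq' : p' ≠ q') (hS : S.Nontrivial)
    (h : insert (p, x) ({q} ×ˢ S) = insert (p', x') ({q'} ×ˢ S')) :
    p = p' ∧ q = q' ∧ x = x' ∧ S = S' := by
  have hmem (t : ι) (v : V) : (t, v) ∈ insert (p, x) ({q} ×ˢ S) ↔
      (t = p' ∧ v = x') ∨ (t = q' ∧ v ∈ S') := by
    simp [h]
  obtain ⟨s, hs, s', hs', hss'⟩ := hS
  -- of the two points `(q, s), (q, s')`, at most one is the apex `(p', x')`
  obtain rfl : q = q' := by
    have := (hmem q s).1 (by simp [hs])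
    have := (hmem q s').1 (by simp [hs'])
    grind
  obtain ⟨rfl, rfl⟩ : p = p' ∧ x = x' := by
    have := (hmem p x).1 (by simp)
    grind
  refine ⟨rfl, rfl, rfl, Set.ext fun v => ?_⟩
  simpa [hpq.symm] using hmem q v

namespace OrientedHypergraph

section Transport

variable (e : V ≃ W) (H : OrientedHypergraph k V)

noncomputable def mapEquiv : OrientedHypergraph k W where
  edges := H.edges.map (Equiv.embeddingCongr (Equiv.refl _) e).toEmbedding
  eq_of_range_eq := by
    have hrange_map (f : Fin k ↪ V) :
        range ⇑(Equiv.embeddingCongr (Equiv.refl _) e f) = e '' range f :=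
      range_comp e f
    simp only [Finset.mem_map, Equiv.coe_toEmbedding, forall_exists_index, and_imp]
    rintro _ f hf rfl _ f' hf' rfl hrange
    rw [hrange_map, hrange_map, (Set.image_injective.2 e.injective).eq_iff] at hrange
    rw [H.eq_of_range_eq f hf f' hf' hrange]

theorem card_edges_mapEquiv : (H.mapEquiv e).edges.card = H.edges.card :=
  Finset.card_map _

variable {H} in
theorem _root_.PropertyO.mapEquiv (hH : PropertyO H) : PropertyO (H.mapEquiv e) := by
  intro r hr
  obtain ⟨f, hf, hcons⟩ := hH _ (e.injective.isStrictTotalOrder_onFun (r := r))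
  exact ⟨f.trans e.toEmbedding, Finset.mem_map_of_mem _ hf, hcons⟩

end Transport

section ThreeCopies

/-- With `X, Y, Z` the copies `0, 1, 2` of `V`, the classes `0, 1, 2, 3` are
`T₁ = (x, ȳ)`, `T₂ = (z̄, x)`, `T₃ = (ȳ, z)` and `T₄ = (x̄, y)`. -/
def threeCopiesEdge (c : Fin 4) (x : V) (f : Fin k ↪ V) : Fin (k + 1) ↪ Fin 3 × V :=
  ![consApex (show (0 : Fin 3) ≠ 1 by decide) x f, snocApex (show (0 : Fin 3) ≠ 2 by decide) f x,
    snocApex (show (2 : Fin 3) ≠ 1 by decide) f x, snocApex (show (1 : Fin 3) ≠ 0 by decide) f x] c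

def apexCopy : Fin 4 → Fin 3 := ![0, 0, 2, 1]

def baseCopy : Fin 4 → Fin 3 := ![1, 2, 1, 0]

theorem apexCopy_ne_baseCopy (c : Fin 4) : apexCopy c ≠ baseCopy c := by
  revert c
  decide

theorem injective_apexCopy_baseCopy : Injective fun c => (apexCopy c, baseCopy c) := by
  decide

theorem range_threeCopiesEdge (c : Fin 4) (x : V) (f : Fin k ↪ V) :
    range ⇑(threeCopiesEdge c x f) = insert (apexCopy c, x) ({baseCopy c} ×ˢ range f) := by
  fin_cases c <;> (first | apply range_consApex | apply range_snocApex) <;> decide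

variable {H : OrientedHypergraph k V}

theorem eq_of_range_threeCopiesEdge_eq (hk : 2 ≤ k) {c c' : Fin 4} {x x' : V}
    {f f' : Fin k ↪ V} (hf : f ∈ H.edges) (hf' : f' ∈ H.edges)
    (h : range ⇑(threeCopiesEdge c x f) = range ⇑(threeCopiesEdge c' x' f')) :
    c = c' ∧ x = x' ∧ f = f' := by
  have : Nontrivial (Fin k) := Fin.nontrivial_iff_two_le.2 hk
  have hS : (range f).Nontrivial := by simpa using Set.nontrivial_univ.image f.injective
  rw [range_threeCopiesEdge, range_threeCopiesEdge] at h
  obtain ⟨hp, hq, rfl, hrange⟩ :=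
    eq_of_insert_singleton_prod_eq (apexCopy_ne_baseCopy c) (apexCopy_ne_baseCopy c') hS h
  exact ⟨injective_apexCopy_baseCopy (Prod.ext hp hq), rfl, H.eq_of_range_eq f hf f' hf' hrange⟩

variable [Fintype V]

variable (H) in
open Classical in
noncomputable def threeCopies (hk : 2 ≤ k) :
    OrientedHypergraph (k + 1) (Fin 3 × V) where
  edges := (Finset.univ ×ˢ H.edges).image
    fun cxf : (Fin 4 × V) × (Fin k ↪ V) => threeCopiesEdge cxf.1.1 cxf.1.2 cxf.2
  eq_of_range_eq := by
    simp only [Finset.mem_image, Finset.mem_product, Finset.mem_univ, true_and]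
    rintro _ ⟨⟨⟨c, x⟩, f⟩, hf, rfl⟩ _ ⟨⟨⟨c', x'⟩, f'⟩, hf', rfl⟩ h
    obtain ⟨rfl, rfl, rfl⟩ := eq_of_range_threeCopiesEdge_eq hk hf hf' h
    rfl

theorem threeCopiesEdge_mem_threeCopies (hk : 2 ≤ k) (c : Fin 4) (x : V) {f : Fin k ↪ V}
    (hf : f ∈ H.edges) : threeCopiesEdge c x f ∈ (H.threeCopies hk).edges := by
  classical
  exact Finset.mem_image.2 ⟨((c, x), f), Finset.mem_product.2 ⟨Finset.mem_univ _, hf⟩, rfl⟩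

theorem card_edges_threeCopies (hk : 2 ≤ k) :
    (H.threeCopies hk).edges.card = 4 * H.edges.card * Fintype.card V := by
  classical
  rw [threeCopies, Finset.card_image_of_injOn, Finset.card_product, Finset.card_univ,
    Fintype.card_prod, Fintype.card_fin]
  · ring
  rintro ⟨⟨c, x⟩, f⟩ hf ⟨⟨c', x'⟩, f'⟩ hf' h
  obtain ⟨rfl, rfl, rfl⟩ := eq_of_range_threeCopiesEdge_eq hk (Finset.mem_product.1 hf).2
    (Finset.mem_product.1 hf').2 (congrArg (fun e : Fin (k + 1) ↪ Fin 3 × V => range ⇑e) h)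
  rfl

theorem _root_.PropertyO.threeCopies (hH : PropertyO H) (hk : 2 ≤ k) :
    PropertyO (H.threeCopies hk) := by
  intro r hr
  obtain ⟨n, rfl⟩ : ∃ n, k = n + 1 := ⟨k - 1, by omega⟩
  have hcopy (c : Fin 3) : ∃ f ∈ H.edges, Consistent r (f.trans (sectR c V)) :=
    hH _ ((sectR c V).injective.isStrictTotalOrder_onFun (r := r))
  obtain ⟨fx, hfx, hx⟩ := hcopy 0
  obtain ⟨fy, hfy, hy⟩ := hcopy 1
  obtain ⟨fz, hfz, hz⟩ := hcopy 2
  let a : Fin 3 × V := (0, fx (Fin.last n))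
  let b : Fin 3 × V := (1, fy (Fin.last n))
  let c : Fin 3 × V := (2, fz (Fin.last n))
  rcases trichotomous_of r a b with hab | hab | hba
  · exact ⟨_, threeCopiesEdge_mem_threeCopies hk 3 b.2 hfx, hx.snocApex (by decide) hab⟩
  · simp [a, b] at hab
  rcases trichotomous_of r b c with hbc | hbc | hcb
  · exact ⟨_, threeCopiesEdge_mem_threeCopies hk 2 c.2 hfy, hy.snocApex (by decide) hbc⟩
  · simp [b, c] at hbc
  · exact ⟨_, threeCopiesEdge_mem_threeCopies hk 1 a.2 hfz,
      hz.snocApex (by decide) (_root_.trans hcb hba)⟩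

end ThreeCopies

end OrientedHypergraph

end

/-- induction step of the construction: from an oriented
`k`-uniform hypergraph `H` with Property O one obtains an oriented
`(k+1)`-uniform hypergraph with Property O on `3·|V|` vertices with exactly
`4·|E|·|V|` edges. -/
theorem construction_step {V : Type*} [Fintype V] (k : ℕ) (hk : 2 ≤ k)
    (H : OrientedHypergraph k V) (hO : PropertyO H) :
    ∃ H' : OrientedHypergraph (k + 1) (Fin (3 * Fintype.card V)),
      PropertyO H' ∧ H'.edges.card = 4 * H.edges.card * Fintype.card V := by
  let e : Fin 3 × V ≃ Fin (3 * Fintype.card V) := Fintype.equivFinOfCardEq (by simp)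
  refine ⟨(H.threeCopies hk).mapEquiv e, (hO.threeCopies hk).mapEquiv e, ?_⟩
  rw [OrientedHypergraph.card_edges_mapEquiv, OrientedHypergraph.card_edges_threeCopies]
end

section
/- For every integer k ≥ 2 there exists an oriented k-uniform hypergraph with Property O having exactly 3^{k−1} vertices and exactly 2^{2(k−2)}·3^{C(k−1,2)+1} edges. -/
open Function Finset

theorem exists_lt_apply_add_one {α : Type*} [LinearOrder α] {n : ℕ} {f : Fin (n + 2) → α}
    (hf : Injective f) : ∃ i, f i < f (i + 1) := by
  obtain ⟨i, hi⟩ := Finite.exists_max f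
  refine ⟨i - 1, ?_⟩
  rw [sub_add_cancel]
  exact (hi _).lt_of_ne (hf.ne (by simp))

theorem fin_three_ne_add_one (a : Fin 3) : a ≠ a + 1 := by decide +revert

theorem fin_three_add_one_add_one_ne (a : Fin 3) : a + 1 + 1 ≠ a := by decide +revert

theorem strictMono_snoc {α : Type*} [Preorder α] {n : ℕ} {f : Fin (n + 1) → α}
    (hf : StrictMono f) {x : α} (hx : f (Fin.last n) < x) :
    StrictMono (Fin.snoc f x : Fin (n + 2) → α) := by
  simpa only [Fin.insertNth_last'] using Fin.strictMono_insertNth_last hf x hx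

section Tuple

variable {V α : Type*} {m : ℕ}

theorem mk_mem_insert_range_iff {e : Fin m ↪ V} {d : Fin m → α} {p i : Fin m} {s t : α} :
    (e i, t) ∈ insert (e p, s) (Set.range fun j => (e j, d j)) ↔
      (i = p ∧ t = s) ∨ t = d i := by
  simp [e.injective.eq_iff, eq_comm]

theorem image_fst_insert_range {e : Fin m ↪ V} {d : Fin m → α} {p : Fin m} {s : α} :
    Prod.fst '' insert (e p, s) (Set.range fun j => (e j, d j)) = Set.range e := by
  rw [Set.image_insert_eq, ← Set.range_comp]
  exact Set.insert_eq_of_mem (Set.mem_range_self p)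

end Tuple

namespace OrientedHypergraph

variable {V W : Type*} {k n : ℕ}

def map (σ : V ≃ W) (H : OrientedHypergraph k V) : OrientedHypergraph k W where
  edges := H.edges.map (Equiv.embeddingCongr (Equiv.refl _) σ).toEmbedding
  eq_of_range_eq := by
    have range_map (e : Fin k ↪ V) :
        Set.range (Equiv.embeddingCongr (Equiv.refl _) σ e) = σ '' Set.range e := by
      simp [Embedding.coe_trans, Set.range_comp]
    simp only [Finset.mem_map, Equiv.coe_toEmbedding, forall_exists_index, and_imp]
    rintro _ e he rfl _ f hf rfl h
    rw [range_map, range_map] at h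
    rw [H.eq_of_range_eq e he f hf (Set.image_injective.2 σ.injective h)]

theorem card_map (σ : V ≃ W) (H : OrientedHypergraph k V) :
    (H.map σ).edges.card = H.edges.card :=
  Finset.card_map _

end OrientedHypergraph

section Lift

variable {V : Type*} {n : ℕ}

def liftSnoc (e : Fin (n + 1) ↪ V) (c : Fin (n + 1) → Fin 3) : Fin (n + 2) ↪ V × Fin 3 :=
  ⟨Fin.snoc (α := fun _ => V × Fin 3) (fun i => (e i, c i))
      (e (Fin.last n), c (Fin.last n) + 1),
    Fin.snoc_injective_of_injective (fun _ _ h => e.injective (Prod.mk.inj h).1)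
      fun ⟨_, hi⟩ => by
        obtain ⟨hv, hc⟩ := Prod.mk.inj hi
        obtain rfl := e.injective hv
        exact fin_three_ne_add_one _ hc⟩

-- The tuple (e₀, 0), (e₀, 1), (e₁, c₀), …, (eₙ₊₁, cₙ).
def liftCons (e : Fin (n + 2) ↪ V) (c : Fin (n + 1) → Fin 3) : Fin (n + 3) ↪ V × Fin 3 :=
  ⟨Fin.cons (α := fun _ => V × Fin 3) (e 0, 0)
      (fun i => (e i, (Fin.cons 1 c : Fin (n + 2) → Fin 3) i)),
    Fin.cons_injective_of_injective
      (fun ⟨_, hi⟩ => by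
        obtain ⟨hv, hc⟩ := Prod.mk.inj hi
        obtain rfl := e.injective hv
        exact absurd hc (by simp))
      fun _ _ h => e.injective (Prod.mk.inj h).1⟩

theorem coe_liftSnoc (e : Fin (n + 1) ↪ V) (c : Fin (n + 1) → Fin 3) :
    ⇑(liftSnoc e c) = Fin.snoc (fun i => (e i, c i)) (e (Fin.last n), c (Fin.last n) + 1) :=
  rfl

theorem range_liftSnoc (e : Fin (n + 1) ↪ V) (c : Fin (n + 1) → Fin 3) :
    Set.range (liftSnoc e c) =
      insert (e (Fin.last n), c (Fin.last n) + 1) (Set.range fun i => (e i, c i)) := by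
  rw [coe_liftSnoc, Fin.range_snoc]

theorem range_liftCons (e : Fin (n + 2) ↪ V) (c : Fin (n + 1) → Fin 3) :
    Set.range (liftCons e c) =
      insert (e 0, 0) (Set.range fun i => (e i, (Fin.cons 1 c : Fin (n + 2) → Fin 3) i)) := by
  simp only [liftCons, Embedding.coeFn_mk]
  exact Fin.range_cons _ _

theorem image_fst_range_liftSnoc (e : Fin (n + 1) ↪ V) (c : Fin (n + 1) → Fin 3) :
    Prod.fst '' Set.range (liftSnoc e c) = Set.range e := by
  rw [range_liftSnoc, image_fst_insert_range]

theorem image_fst_range_liftCons (e : Fin (n + 2) ↪ V) (c : Fin (n + 1) → Fin 3) :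
    Prod.fst '' Set.range (liftCons e c) = Set.range e := by
  rw [range_liftCons, image_fst_insert_range]

end Lift

namespace OrientedHypergraph

variable {V : Type*} {n : ℕ}

theorem eq_of_range_liftSnoc_eq {H : OrientedHypergraph (n + 1) V} {e e' : Fin (n + 1) ↪ V}
    (he : e ∈ H.edges) (he' : e' ∈ H.edges) {c c' : Fin (n + 1) → Fin 3}
    (h : Set.range (liftSnoc e c) = Set.range (liftSnoc e' c')) : e = e' ∧ c = c' := by
  obtain rfl : e = e' := H.eq_of_range_eq e he e' he' <| by
    rw [← image_fst_range_liftSnoc e c, h, image_fst_range_liftSnoc]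
  have key (i t) : (i = Fin.last n ∧ t = c (Fin.last n) + 1) ∨ t = c i ↔
      (i = Fin.last n ∧ t = c' (Fin.last n) + 1) ∨ t = c' i := by
    rw [← mk_mem_insert_range_iff, ← mk_mem_insert_range_iff, ← range_liftSnoc,
      ← range_liftSnoc, h]
  refine ⟨rfl, funext fun i => ?_⟩
  by_cases hi : i = Fin.last n
  · subst hi
    by_contra hne
    have h₁ := (key _ (c (Fin.last n))).1 (Or.inr rfl)
    have h₂ := (key _ (c' (Fin.last n))).2 (Or.inr rfl)
    simp only [true_and, or_iff_left hne, or_iff_left (Ne.symm hne)] at h₁ h₂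
    rw [h₂] at h₁
    exact fin_three_add_one_add_one_ne _ h₁.symm
  · simpa [hi] using (key i (c i)).1 (Or.inr rfl)

theorem eq_of_range_liftCons_eq {H : OrientedHypergraph (n + 2) V} {e e' : Fin (n + 2) ↪ V}
    (he : e ∈ H.edges) (he' : e' ∈ H.edges) {c c' : Fin (n + 1) → Fin 3}
    (h : Set.range (liftCons e c) = Set.range (liftCons e' c')) : e = e' ∧ c = c' := by
  obtain rfl : e = e' := H.eq_of_range_eq e he e' he' <| by
    rw [← image_fst_range_liftCons e c, h, image_fst_range_liftCons]
  refine ⟨rfl, funext fun j => ?_⟩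
  have key := congrArg ((e j.succ, c j) ∈ ·) h
  simpa only [range_liftCons, mk_mem_insert_range_iff, Fin.succ_ne_zero, Fin.cons_succ,
    false_and, false_or, eq_iff_iff, true_iff] using key

theorem range_liftSnoc_ne_range_liftCons {H : OrientedHypergraph (n + 2) V}
    {e e' : Fin (n + 2) ↪ V} (he : e ∈ H.edges) (he' : e' ∈ H.edges)
    (c : Fin (n + 2) → Fin 3) (c' : Fin (n + 1) → Fin 3) :
    Set.range (liftSnoc e c) ≠ Set.range (liftCons e' c') := by
  intro h
  obtain rfl : e = e' := H.eq_of_range_eq e he e' he' <| by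
    rw [← image_fst_range_liftSnoc e c, h, image_fst_range_liftCons]
  have key (t) := congrArg ((e (Fin.last (n + 1)), t) ∈ ·) h
  simp only [range_liftSnoc, range_liftCons, mk_mem_insert_range_iff, true_and,
    Fin.last_eq_zero_iff, Nat.add_one_ne_zero, false_and, false_or, eq_iff_iff] at key
  exact fin_three_ne_add_one _ (((key _).1 (Or.inr rfl)).trans ((key _).1 (Or.inl rfl)).symm)

open Classical in
noncomputable def snocBlowup (H : OrientedHypergraph (n + 1) V) :
    OrientedHypergraph (n + 2) (V × Fin 3) where
  edges := (H.edges ×ˢ univ).image fun p => liftSnoc p.1 p.2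
  eq_of_range_eq := by
    simp only [mem_image, mem_product, mem_univ, and_true, Prod.exists, forall_exists_index,
      and_imp]
    rintro _ e c he rfl _ e' c' he' rfl h
    obtain ⟨rfl, rfl⟩ := eq_of_range_liftSnoc_eq he he' h
    rfl

theorem mem_snocBlowup_edges {H : OrientedHypergraph (n + 1) V} {t : Fin (n + 2) ↪ V × Fin 3} :
    t ∈ H.snocBlowup.edges ↔ ∃ e ∈ H.edges, ∃ c, liftSnoc e c = t := by
  simp [snocBlowup]

theorem card_snocBlowup (H : OrientedHypergraph (n + 1) V) :
    H.snocBlowup.edges.card = H.edges.card * 3 ^ (n + 1) := by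
  classical
  rw [snocBlowup, card_image_of_injOn, card_product, card_univ, Fintype.card_fun,
    Fintype.card_fin, Fintype.card_fin]
  rintro ⟨e, c⟩ hp ⟨e', c'⟩ hp' h
  obtain ⟨rfl, rfl⟩ := eq_of_range_liftSnoc_eq (mem_product.1 hp).1 (mem_product.1 hp').1
    (congrArg (Set.range ∘ DFunLike.coe) h)
  rfl

open Classical in
noncomputable def blowup (H : OrientedHypergraph (n + 2) V) :
    OrientedHypergraph (n + 3) (V × Fin 3) where
  edges := H.snocBlowup.edges ∪ (H.edges ×ˢ univ).image fun p => liftCons p.1 p.2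
  eq_of_range_eq := by
    simp only [mem_union, mem_snocBlowup_edges, mem_image, mem_product, mem_univ, and_true,
      Prod.exists]
    rintro _ (⟨e, he, c, rfl⟩ | ⟨e, c, he, rfl⟩) _
      (⟨e', he', c', rfl⟩ | ⟨e', c', he', rfl⟩) h
    · obtain ⟨rfl, rfl⟩ := eq_of_range_liftSnoc_eq he he' h
      rfl
    · exact absurd h (range_liftSnoc_ne_range_liftCons he he' c c')
    · exact absurd h.symm (range_liftSnoc_ne_range_liftCons he' he c' c)
    · obtain ⟨rfl, rfl⟩ := eq_of_range_liftCons_eq he he' h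
      rfl

theorem card_blowup (H : OrientedHypergraph (n + 2) V) :
    H.blowup.edges.card = H.edges.card * 3 ^ (n + 2) + H.edges.card * 3 ^ (n + 1) := by
  classical
  have hdisj : Disjoint H.snocBlowup.edges
      ((H.edges ×ˢ univ).image fun p : _ × (Fin (n + 1) → Fin 3) => liftCons p.1 p.2) := by
    simp only [disjoint_left, mem_snocBlowup_edges, mem_image, mem_product, mem_univ, and_true,
      Prod.exists]
    rintro _ ⟨e, he, c, rfl⟩ ⟨e', c', he', h⟩
    exact range_liftSnoc_ne_range_liftCons he he' c c'
      (congrArg (Set.range ∘ DFunLike.coe) h).symm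
  rw [blowup, card_union_of_disjoint hdisj, card_snocBlowup, card_image_of_injOn, card_product,
    card_univ, Fintype.card_fun, Fintype.card_fin, Fintype.card_fin]
  rintro ⟨e, c⟩ hp ⟨e', c'⟩ hp' h
  obtain ⟨rfl, rfl⟩ := eq_of_range_liftCons_eq (mem_product.1 hp).1 (mem_product.1 hp').1
    (congrArg (Set.range ∘ DFunLike.coe) h)
  rfl

def point : OrientedHypergraph 1 Unit where
  edges := {⟨fun _ => (), injective_of_subsingleton _⟩}
  eq_of_range_eq _ he _ hf _ := (mem_singleton.1 he).trans (mem_singleton.1 hf).symm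

end OrientedHypergraph

namespace PropertyO

variable {V W : Type*} {k n : ℕ}

theorem mono {H H' : OrientedHypergraph k V} (hO : PropertyO H)
    (h : H.edges ⊆ H'.edges) : PropertyO H' := fun r hr =>
  let ⟨e, he, hc⟩ := hO r hr
  ⟨e, h he, hc⟩

theorem map {H : OrientedHypergraph k V} (hO : PropertyO H) (σ : V ≃ W) :
    PropertyO (H.map σ) := by
  intro r _
  obtain ⟨e, he, hc⟩ := hO _ (RelEmbedding.preimage σ.toEmbedding r).isStrictTotalOrder
  exact ⟨_, mem_map_of_mem _ he, hc⟩

theorem point : PropertyO OrientedHypergraph.point := fun _ _ =>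
  ⟨_, mem_singleton_self _, fun i j hij => absurd hij (Subsingleton.elim i j ▸ lt_irrefl i)⟩

theorem snocBlowup {H : OrientedHypergraph (n + 1) V} (hO : PropertyO H) :
    PropertyO H.snocBlowup := by
  classical
  intro r _
  let := linearOrderOfSTO r
  choose b hb using fun v : V => Finite.exists_min fun t : Fin 3 => (v, t)
  let β : V ↪ V × Fin 3 := ⟨fun v => (v, b v), fun _ _ h => (Prod.mk.inj h).1⟩
  obtain ⟨e, he, he_mono⟩ := hO _ (RelEmbedding.preimage β r).isStrictTotalOrder
  obtain ⟨a, ha⟩ := exists_lt_apply_add_one (n := 1) (Prod.mk_right_injective (e (Fin.last n)))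
  let c := update (fun i => b (e i)) (Fin.last n) a
  have hc : StrictMono fun i => (e i, c i) := Fin.strictMono_iff_lt_succ.2 fun i =>
    calc (e i.castSucc, c i.castSucc) = (e i.castSucc, b (e i.castSucc)) := by
          rw [show c i.castSucc = _ from update_of_ne (Fin.castSucc_ne_last i) _ _]
      _ < (e i.succ, b (e i.succ)) := he_mono _ _ Fin.castSucc_lt_succ
      _ ≤ (e i.succ, c i.succ) := hb _ _
  refine ⟨liftSnoc e c, OrientedHypergraph.mem_snocBlowup_edges.2 ⟨e, he, c, rfl⟩, ?_⟩
  have hlift : StrictMono (liftSnoc e c) := by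
    rw [coe_liftSnoc]
    exact strictMono_snoc hc (by simpa [c] using ha)
  exact fun _ _ hij => hlift hij

theorem blowup {H : OrientedHypergraph (n + 2) V} (hO : PropertyO H) : PropertyO H.blowup := by
  classical exact hO.snocBlowup.mono subset_union_left

end PropertyO

theorem exists_propertyO_card_eq (m : ℕ) :
    ∃ (V : Type) (_ : Fintype V) (H : OrientedHypergraph (m + 2) V),
      Fintype.card V = 3 ^ (m + 1) ∧ PropertyO H ∧
        H.edges.card = 4 ^ m * 3 ^ ((m + 1).choose 2 + 1) := by
  induction m with
  | zero =>
    refine ⟨_, inferInstance, OrientedHypergraph.point.snocBlowup, by simp,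
      .snocBlowup .point, ?_⟩
    simp [OrientedHypergraph.card_snocBlowup, OrientedHypergraph.point]
  | succ m ih =>
    obtain ⟨V, _, H, hV, hO, hE⟩ := ih
    refine ⟨V × Fin 3, inferInstance, H.blowup, by simp [hV, pow_succ], hO.blowup, ?_⟩
    rw [OrientedHypergraph.card_blowup, hE, Nat.choose_succ_succ' (m + 1) 1, Nat.choose_one_right]
    ring

/-- for every `k ≥ 2` there is an oriented `k`-uniform hypergraph
with Property O on `3^{k−1}` vertices with exactly `2^{2(k−2)}·3^{C(k−1,2)+1}`
edges. -/
theorem construction_exists (k : ℕ) (hk : 2 ≤ k) :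
    ∃ H : OrientedHypergraph k (Fin (3 ^ (k - 1))), PropertyO H ∧
      H.edges.card = 2 ^ (2 * (k - 2)) * 3 ^ ((k - 1).choose 2 + 1) := by
  obtain ⟨m, rfl⟩ := Nat.exists_eq_add_of_le' hk
  obtain ⟨V, _, H, hV, hO, hE⟩ := exists_propertyO_card_eq m
  refine ⟨H.map (Fintype.equivFinOfCardEq hV), hO.map _, ?_⟩
  rw [OrientedHypergraph.card_map, hE, Nat.add_sub_cancel, pow_mul]
  norm_num
end

section
/- There exists a 3-tournament on a vertex set of 9 elements that has Property O (so n(3) ≤ 9, where n(3) is the minimum number of vertices in a 3-tournament with Property O). -/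
open Finset

theorem PropertyO.of_forall_sublist {k : ℕ} {V : Type*} [Fintype V]
    (H : OrientedHypergraph k V)
    (h : ∀ l : List V, l.Nodup → (∀ x, x ∈ l) →
      ∃ e ∈ H.edges, (List.ofFn e).Sublist l) :
    PropertyO H := by
  classical
  intro r _
  let := linearOrderOfSTO r
  obtain ⟨e, he, hsub⟩ := h (univ.sort (· ≤ ·)) (sort_nodup _ _) (by simp)
  have hsorted := (List.sortedLT_iff_pairwise.mp (sortedLT_sort univ)).sublist hsub
  exact ⟨e, he, fun i j hij => List.pairwise_ofFn.mp hsorted hij⟩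

lemma StrictMono.eq_comp_rev_of_range_eq {k : ℕ} {α : Type*} [LinearOrder α]
    {e f : Fin k → α} (he : StrictMono e) (hf : StrictAnti f)
    (h : Set.range e = Set.range f) : e = f ∘ Fin.rev :=
  (he.range_inj (hf.comp Fin.rev_strictAnti)).1
    (by rw [h, Fin.rev_surjective.range_comp])

namespace OrientedHypergraph

section OrientBy

variable {k : ℕ} {α : Type*} [LinearOrder α]

/-- `P` is read on the increasing enumeration of a `k`-set and decides whether the set is
oriented increasingly or decreasingly. -/
def IsOrientedBy (P : (Fin k → α) → Prop) (e : Fin k → α) : Prop :=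
  StrictMono e ∧ P e ∨ StrictAnti e ∧ ¬ P (e ∘ Fin.rev)

lemma IsOrientedBy.eq_of_range_eq {P : (Fin k → α) → Prop} {e f : Fin k → α}
    (he : IsOrientedBy P e) (hf : IsOrientedBy P f) (h : Set.range e = Set.range f) : e = f := by
  rcases he with ⟨he, hPe⟩ | ⟨he, hPe⟩ <;> rcases hf with ⟨hf, hPf⟩ | ⟨hf, hPf⟩
  · exact (he.range_inj hf).1 h
  · exact absurd (he.eq_comp_rev_of_range_eq hf h ▸ hPe) hPf
  · exact absurd (hf.eq_comp_rev_of_range_eq he h.symm ▸ hPf) hPe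
  · exact (he.range_inj hf).1 h

variable [Fintype α]

open Classical in
noncomputable def orientBy (P : (Fin k → α) → Prop) : OrientedHypergraph k α where
  edges := {e | IsOrientedBy P e}
  eq_of_range_eq _ he _ hf h :=
    DFunLike.coe_injective ((Finset.mem_filter.1 he).2.eq_of_range_eq (Finset.mem_filter.1 hf).2 h)

@[simp]
lemma mem_orientBy_edges {P : (Fin k → α) → Prop} {e : Fin k ↪ α} :
    e ∈ (orientBy P).edges ↔ IsOrientedBy P e := by
  simp [orientBy]

lemma exists_mem_orientBy_edges {P : (Fin k → α) → Prop} {t : Fin k → α}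
    (ht : IsOrientedBy P t) : ∃ e ∈ (orientBy P).edges, ⇑e = t := by
  have hinj : t.Injective := by
    rcases ht with ⟨ht, -⟩ | ⟨ht, -⟩
    exacts [ht.injective, ht.injective]
  exact ⟨⟨t, hinj⟩, mem_orientBy_edges.2 ht, rfl⟩

theorem isTournament_orientBy (P : (Fin k → α) → Prop) : IsTournament (orientBy P) := by
  intro S hS
  set s := S.orderEmbOfFin hS
  by_cases hP : P s
  · exact ⟨s.toEmbedding, mem_orientBy_edges.2 (.inl ⟨s.strictMono, hP⟩),
      S.range_orderEmbOfFin hS⟩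
  · obtain ⟨e, he, he'⟩ := exists_mem_orientBy_edges (P := P) (t := s ∘ Fin.rev)
      (.inr ⟨s.strictMono.comp_strictAnti Fin.rev_strictAnti, by
        rwa [Function.comp_assoc, Fin.rev_involutive.comp_self, Function.comp_id]⟩)
    refine ⟨e, he, ?_⟩
    rw [he', Fin.rev_surjective.range_comp, S.range_orderEmbOfFin hS]

end OrientBy

end OrientedHypergraph

namespace List

section PatternSearch

variable {α : Type*} (p : List α → Bool) (k : ℕ)

def completesPattern (placed : List α) (x : α) : Bool :=
  (placed.sublistsLen k).any fun s => p (s ++ [x])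

def allOrderingsHavePattern [DecidableEq α] : ℕ → List α → List α → Bool
  | 0, _, _ => false
  | n + 1, rem, placed => !rem.isEmpty && rem.all fun x =>
      completesPattern p k placed x || allOrderingsHavePattern n (rem.erase x) (placed ++ [x])

variable {p k}

lemma exists_sublist_of_completesPattern {placed : List α} {x : α}
    (h : completesPattern p k placed x) (t : List α) :
    ∃ s, s.Sublist (placed ++ x :: t) ∧ p s := by
  obtain ⟨s, hs, hps⟩ := any_eq_true.1 h
  refine ⟨s ++ [x], ?_, hps⟩
  simpa using (mem_sublistsLen.1 hs).1.append (singleton_sublist.2 (mem_cons_self ..))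

lemma exists_sublist_of_allOrderingsHavePattern [DecidableEq α] {n : ℕ} {rem placed : List α}
    (h : allOrderingsHavePattern p k n rem placed) {l : List α} (hl : l.Perm rem) :
    ∃ s, s.Sublist (placed ++ l) ∧ p s := by
  induction n generalizing rem placed l with
  | zero => simp [allOrderingsHavePattern] at h
  | succ n ih =>
    simp only [allOrderingsHavePattern, Bool.and_eq_true, Bool.not_eq_true', all_eq_true,
      Bool.or_eq_true] at h
    obtain ⟨hne, hall⟩ := h
    cases l with
    | nil => simp [hl.symm.eq_nil] at hne
    | cons x t =>
      have hx : x ∈ rem := hl.subset mem_cons_self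
      rcases hall x hx with hhit | hrec
      · exact exists_sublist_of_completesPattern hhit t
      · simpa using ih hrec ((hl.trans (perm_cons_erase hx)).cons_inv)

end PatternSearch

end List

open OrientedHypergraph

noncomputable def parityTournament (n : ℕ) : OrientedHypergraph 3 (Fin n) :=
  orientBy fun t => Odd ((t 0 : ℕ) + t 1 + t 2)

def parityPattern {n : ℕ} : List (Fin n) → Bool
  | [x, y, z] =>
    decide (x < y ∧ y < z ∧ Odd ((x : ℕ) + y + z) ∨
      z < y ∧ y < x ∧ ¬Odd ((x : ℕ) + y + z))
  | _ => false

lemma exists_edge_of_parityPattern {n : ℕ} {s : List (Fin n)} (h : parityPattern s) :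
    ∃ e ∈ (parityTournament n).edges, List.ofFn e = s := by
  match s, h with
  | [x, y, z], h =>
    refine (exists_mem_orientBy_edges (t := ![x, y, z]) ?_).imp fun e ⟨he, hfun⟩ =>
      ⟨he, by simp [hfun]⟩
    simp only [parityPattern, decide_eq_true_eq] at h
    rcases h with ⟨hxy, hyz, hodd⟩ | ⟨hzy, hyx, heven⟩
    · exact .inl ⟨by simp [hxy, hyz], by simpa using hodd⟩
    · exact .inr ⟨by simp [hzy, hyx], by simpa [Fin.rev, add_comm, add_left_comm] using heven⟩

theorem propertyO_parityTournament_nine : PropertyO (parityTournament 9) := by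
  have hsearch : List.allOrderingsHavePattern parityPattern 2 9 (List.finRange 9) [] := by
    decide +kernel
  refine PropertyO.of_forall_sublist _ fun l hnodup hmem => ?_
  have hl : l.Perm (List.finRange 9) :=
    (List.perm_ext_iff_of_nodup hnodup (List.nodup_finRange 9)).2 (by simp [hmem])
  obtain ⟨s, hs, hpat⟩ := List.exists_sublist_of_allOrderingsHavePattern hsearch hl
  obtain ⟨e, he, rfl⟩ := exists_edge_of_parityPattern hpat
  exact ⟨e, he, hs⟩

/-- there is a `3`-tournament on `9` vertices with Property O. -/
theorem three_tournament_on_nine :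
    ∃ H : OrientedHypergraph 3 (Fin 9), IsTournament H ∧ PropertyO H :=
  ⟨parityTournament 9, isTournament_orientBy _, propertyO_parityTournament_nine⟩
end

section
/- Every oriented 3-uniform hypergraph with Property O has strictly more than 6 edges; that is, f(3) > 6. -/
/-!
Each 3-tuple is consistent with exactly `n!/6` of the `n!` linear orders of an `n`-set, so
Property O needs at least six edges, and with at most six edges every order is consistent with
exactly one edge. Then no two edges have a common linear extension, i.e. (Szpilrajn) any two
edges order some common pair of vertices oppositely. In particular their vertex triples meet in
exactly two points; among six such triples three contain a common pair `{p, q}`, and three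
edges cannot pairwise disagree on the order of `p` and `q`.
-/

open Finset Relation
open scoped Nat

section Tuples

variable {k : ℕ} {V : Type*}

def Precedes (e : Fin k ↪ V) (u v : V) : Prop :=
  ∃ i j, i < j ∧ e i = u ∧ e j = v

def Opposed (e f : Fin k ↪ V) : Prop :=
  ∃ u v, Precedes e u v ∧ Precedes f v u

variable {e f : Fin k ↪ V} {u v w : V}

theorem Precedes.irrefl (u : V) : ¬ Precedes e u u := by
  rintro ⟨i, j, hij, rfl, h⟩
  exact hij.ne' (e.injective h)

theorem Precedes.trans (huv : Precedes e u v) (hvw : Precedes e v w) : Precedes e u w := by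
  obtain ⟨i, j, hij, rfl, rfl⟩ := huv
  obtain ⟨j', l, hjl, hj, rfl⟩ := hvw
  obtain rfl := e.injective hj
  exact ⟨i, l, hij.trans hjl, rfl, rfl⟩

theorem Precedes.asymm (huv : Precedes e u v) : ¬ Precedes e v u :=
  fun hvu => Precedes.irrefl u (huv.trans hvu)

theorem Precedes.mem_map_univ_left (h : Precedes e u v) : u ∈ univ.map e := by
  obtain ⟨i, -, -, rfl, -⟩ := h
  exact mem_map_of_mem e (mem_univ i)

theorem Precedes.mem_map_univ_right (h : Precedes e u v) : v ∈ univ.map e := by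
  obtain ⟨-, j, -, -, rfl⟩ := h
  exact mem_map_of_mem e (mem_univ j)

theorem Opposed.symm (h : Opposed e f) : Opposed f e := by
  obtain ⟨u, v, huv, hvu⟩ := h
  exact ⟨v, u, hvu, huv⟩

theorem Precedes.of_not_opposed (hef : ¬ Opposed e f) (h : Precedes f u v)
    (hu : u ∈ univ.map e) (hv : v ∈ univ.map e) : Precedes e u v := by
  obtain ⟨i, -, rfl⟩ := mem_map.mp hu
  obtain ⟨j, -, rfl⟩ := mem_map.mp hv
  rcases lt_trichotomy i j with hij | rfl | hji
  · exact ⟨i, j, hij, rfl, rfl⟩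
  · exact absurd h (Precedes.irrefl _)
  · exact absurd ⟨_, _, ⟨j, i, hji, rfl, rfl⟩, h⟩ hef

/-- Two tuples that are not opposed agree on their common vertices, so a path alternating
between them collapses to at most one change of tuple. -/
theorem transGen_precedes_sup (hef : ¬ Opposed e f)
    (h : TransGen (Precedes e ⊔ Precedes f) u v) :
    Precedes e u v ∨ Precedes f u v ∨ (∃ w, Precedes e u w ∧ Precedes f w v) ∨
      (∃ w, Precedes f u w ∧ Precedes e w v) := by
  have hfe : ¬ Opposed f e := fun h => hef h.symm
  induction h with
  | single h => exact h.elim Or.inl (Or.inr ∘ Or.inl)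
  | @tail b c _ hbc ih =>
    rcases ih with he | hf | ⟨w, he, hf⟩ | ⟨w, hf, he⟩ <;> rcases hbc with hbc | hbc
    · exact Or.inl (he.trans hbc)
    · exact Or.inr (Or.inr (Or.inl ⟨b, he, hbc⟩))
    · exact Or.inr (Or.inr (Or.inr ⟨b, hf, hbc⟩))
    · exact Or.inr (Or.inl (hf.trans hbc))
    · exact Or.inl (he.trans ((hf.of_not_opposed hef he.mem_map_univ_right
        hbc.mem_map_univ_left).trans hbc))
    · exact Or.inr (Or.inr (Or.inl ⟨w, he, hf.trans hbc⟩))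
    · exact Or.inr (Or.inr (Or.inr ⟨w, hf, he.trans hbc⟩))
    · exact Or.inr (Or.inl (hf.trans ((he.of_not_opposed hfe hf.mem_map_univ_right
        hbc.mem_map_univ_left).trans hbc)))

theorem irrefl_transGen_precedes_sup (hef : ¬ Opposed e f) (u : V) :
    ¬ TransGen (Precedes e ⊔ Precedes f) u u := by
  intro h
  rcases transGen_precedes_sup hef h with he | hf | ⟨w, he, hf⟩ | ⟨w, hf, he⟩
  · exact Precedes.irrefl u he
  · exact Precedes.irrefl u hf
  · exact hef ⟨u, w, he, hf⟩
  · exact hef ⟨w, u, he, hf⟩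

end Tuples

theorem exists_equiv_fin_lt_of_acyclic {V : Type*} [Fintype V] (s : V → V → Prop)
    (hs : ∀ u, ¬ TransGen s u u) :
    ∃ σ : V ≃ Fin (Fintype.card V), ∀ u v, s u v → σ u < σ v := by
  have : IsPartialOrder V (ReflTransGen s) :=
    { refl := fun _ => ReflTransGen.refl
      trans := fun _ _ _ => ReflTransGen.trans
      antisymm := fun u v huv hvu => by
        by_contra hne
        obtain rfl | huv := reflTransGen_iff_eq_or_transGen.mp huv
        · exact hne rfl
        · exact hs u (huv.trans_left hvu) }
  obtain ⟨r, hr, hsr⟩ := extend_partialOrder (ReflTransGen s)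
  let _ : LinearOrder V :=
    { le := r
      le_refl := hr.refl
      le_trans := hr.trans
      le_antisymm := hr.antisymm
      le_total := hr.total
      toDecidableLE := Classical.decRel r }
  refine ⟨(Fintype.orderIsoFinOfCardEq V rfl).symm.toEquiv, fun u v huv => ?_⟩
  have hne : u ≠ v := by rintro rfl; exact hs u (.single huv)
  exact (Fintype.orderIsoFinOfCardEq V rfl).symm.lt_iff_lt.mpr
    (lt_of_le_of_ne (hsr _ _ (.single huv)) hne)

section Counting

variable {k : ℕ} {V : Type*} [Fintype V]

open Classical in
/-- Linear orders of `V` are encoded as bijections `σ : V ≃ Fin (card V)`, with `u` below `v`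
iff `σ u < σ v`. -/
noncomputable def consistentOrders (e : Fin k ↪ V) : Finset (V ≃ Fin (Fintype.card V)) :=
  {σ | StrictMono (σ ∘ e)}

theorem mem_consistentOrders {e : Fin k ↪ V} {σ : V ≃ Fin (Fintype.card V)} :
    σ ∈ consistentOrders e ↔ StrictMono (σ ∘ e) := by
  simp [consistentOrders]

theorem exists_mem_consistentOrders_of_not_opposed {e f : Fin k ↪ V} (hef : ¬ Opposed e f) :
    ∃ σ, σ ∈ consistentOrders e ∧ σ ∈ consistentOrders f := by
  obtain ⟨σ, hσ⟩ := exists_equiv_fin_lt_of_acyclic _ (irrefl_transGen_precedes_sup hef)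
  exact ⟨σ, mem_consistentOrders.mpr fun i j hij => hσ _ _ (Or.inl ⟨i, j, hij, rfl, rfl⟩),
    mem_consistentOrders.mpr fun i j hij => hσ _ _ (Or.inr ⟨i, j, hij, rfl, rfl⟩)⟩

theorem card_consistentOrders_trans_perm (e : Fin k ↪ V) (τ : Equiv.Perm V) :
    #(consistentOrders (e.trans τ.toEmbedding)) = #(consistentOrders e) :=
  card_equiv (Equiv.equivCongr τ.symm (Equiv.refl _)) fun σ => by
    simp [mem_consistentOrders, Function.comp_def]

theorem Tuple.sort_eq_iff_strictMono {α : Type*} [LinearOrder α] {g : Fin k → α}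
    (hg : Function.Injective g) (π : Equiv.Perm (Fin k)) :
    Tuple.sort g = π ↔ StrictMono (g ∘ π) := by
  rw [eq_comm, Tuple.eq_sort_iff]
  refine ⟨fun h => h.1.strictMono_of_injective (hg.comp π.injective),
    fun h => ⟨h.monotone, ?_⟩⟩
  intro i j hij hgij
  exact absurd (π.injective (hg hgij)) hij.ne

theorem factorial_mul_card_consistentOrders (e : Fin k ↪ V) :
    k ! * #(consistentOrders e) = (Fintype.card V)! := by
  classical
  have hfibre (π : Equiv.Perm (Fin k)) :
      ({σ | Tuple.sort (σ ∘ e) = π} : Finset (V ≃ Fin (Fintype.card V))) =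
        consistentOrders (e.trans (π.viaEmbedding e).toEmbedding) := by
    ext σ
    rw [mem_filter, mem_consistentOrders,
      Tuple.sort_eq_iff_strictMono (σ.injective.comp e.injective)]
    simp [Function.comp_def, Equiv.Perm.viaEmbedding_apply]
  calc k ! * #(consistentOrders e)
      = ∑ π : Equiv.Perm (Fin k),
          #({σ | Tuple.sort (σ ∘ e) = π} : Finset (V ≃ Fin (Fintype.card V))) := by
        simp [hfibre, card_consistentOrders_trans_perm, Fintype.card_perm]
    _ = (Fintype.card V)! := by
        rw [← card_eq_sum_card_fiberwise (by simp), card_univ,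
          Fintype.card_equiv (Fintype.equivFin V)]

end Counting

section Cover

variable {ι α : Type*} [Fintype α] [DecidableEq α] {s : Finset ι} {A : ι → Finset α}

theorem sum_card_eq_sum_card_filter_mem (s : Finset ι) (A : ι → Finset α) :
    ∑ i ∈ s, #(A i) = ∑ a, #{i ∈ s | a ∈ A i} := by
  simp_rw [card_eq_sum_ones, sum_filter]
  rw [sum_comm]
  simp

theorem card_le_sum_card_of_cover (hA : ∀ a, ∃ i ∈ s, a ∈ A i) :
    Fintype.card α ≤ ∑ i ∈ s, #(A i) := by
  rw [sum_card_eq_sum_card_filter_mem, Fintype.card, card_eq_sum_ones]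
  refine sum_le_sum fun a _ => one_le_card.mpr ?_
  obtain ⟨i, hi, ha⟩ := hA a
  exact ⟨i, mem_filter.mpr ⟨hi, ha⟩⟩

theorem pairwiseDisjoint_of_cover_of_sum_card_le (hA : ∀ a, ∃ i ∈ s, a ∈ A i)
    (hsum : ∑ i ∈ s, #(A i) ≤ Fintype.card α) : (s : Set ι).PairwiseDisjoint A := by
  intro i hi j hj hij
  rw [Function.onFun, disjoint_left]
  intro a hai haj
  have hone : ∀ b ∈ univ, 1 ≤ #{i ∈ s | b ∈ A i} := fun b _ => by
    obtain ⟨i, hi, hb⟩ := hA b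
    exact one_le_card.mpr ⟨i, mem_filter.mpr ⟨hi, hb⟩⟩
  have hlt : 1 < #{i ∈ s | a ∈ A i} :=
    one_lt_card.mpr ⟨i, mem_filter.mpr ⟨hi, hai⟩, j, mem_filter.mpr ⟨hj, haj⟩, hij⟩
  have := sum_lt_sum hone ⟨a, mem_univ a, hlt⟩
  rw [← sum_card_eq_sum_card_filter_mem, sum_const, smul_eq_mul, mul_one, card_univ] at this
  omega

end Cover

theorem PropertyO.exists_mem_consistentOrders {k : ℕ} {V : Type*} [Fintype V]
    {H : OrientedHypergraph k V} (hO : PropertyO H) (σ : V ≃ Fin (Fintype.card V)) :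
    ∃ e ∈ H.edges, σ ∈ consistentOrders e := by
  let _ : LinearOrder V := LinearOrder.lift' σ σ.injective
  obtain ⟨e, he, hc⟩ := hO (· < ·) inferInstance
  exact ⟨e, he, mem_consistentOrders.mpr hc⟩

section Triples

variable {V : Type*} [DecidableEq V]

theorem subset_union_of_card_inter_eq_two {s t u : Finset V} (hu : #u = 3)
    (hus : #(u ∩ s) = 2) (hut : #(u ∩ t) = 2) (hst : #(s ∩ t) = 2) (hP : ¬ s ∩ t ⊆ u) :
    u ⊆ s ∪ t := by
  intro x hx
  by_contra hxst
  rw [mem_union, not_or] at hxst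
  have hcard : #(u.erase x) = 2 := by rw [card_erase_of_mem hx, hu]
  have hs : u ∩ s = u.erase x :=
    eq_of_subset_of_card_le (fun y hy => mem_erase.mpr
      ⟨fun h => hxst.1 (h ▸ (mem_inter.mp hy).2), (mem_inter.mp hy).1⟩) (by omega)
  have ht : u ∩ t = u.erase x :=
    eq_of_subset_of_card_le (fun y hy => mem_erase.mpr
      ⟨fun h => hxst.2 (h ▸ (mem_inter.mp hy).2), (mem_inter.mp hy).1⟩) (by omega)
  have hsub : u.erase x ⊆ s ∩ t := fun y hy =>
    mem_inter.mpr ⟨(mem_inter.mp (hs ▸ hy)).2, (mem_inter.mp (ht ▸ hy)).2⟩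
  exact hP ((eq_of_subset_of_card_le hsub (by omega)).symm ▸ erase_subset x u)

theorem exists_card_two_subset_of_card_inter_eq_two {ι : Type*} {E : Finset ι}
    {R : ι → Finset V} (hR : ∀ i ∈ E, #(R i) = 3)
    (hE : ∀ i ∈ E, ∀ j ∈ E, i ≠ j → #(R i ∩ R j) = 2) (h5 : 5 ≤ #E) :
    ∃ P : Finset V, #P = 2 ∧ 2 < #{i ∈ E | P ⊆ R i} := by
  obtain ⟨s, hs, t, ht, hst⟩ := one_lt_card.mp (by omega : 1 < #E)
  refine ⟨R s ∩ R t, hE s hs t ht hst, ?_⟩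
  have hinj : Set.InjOn R E := fun i hi j hj hij => by
    by_contra hne
    have := hE i hi j hj hne
    rw [hij, inter_self, hR j hj] at this
    omega
  have hRst : R s ≠ R t := fun h => hst (hinj hs ht h)
  have hunion : #(R s ∪ R t) = 4 := by
    have := card_union_add_card_inter (R s) (R t)
    rw [hR s hs, hR t ht, hE s hs t ht hst] at this
    omega
  have hRs : R s ∈ powersetCard 3 (R s ∪ R t) :=
    mem_powersetCard.mpr ⟨subset_union_left, hR s hs⟩
  have hRt : R t ∈ (powersetCard 3 (R s ∪ R t)).erase (R s) :=
    mem_erase.mpr ⟨hRst.symm, mem_powersetCard.mpr ⟨subset_union_right, hR t ht⟩⟩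
  have hbad : #{i ∈ E | ¬ R s ∩ R t ⊆ R i} ≤ 2 := calc
    #{i ∈ E | ¬ R s ∩ R t ⊆ R i}
        ≤ #(((powersetCard 3 (R s ∪ R t)).erase (R s)).erase (R t)) := by
          refine card_le_card_of_injOn R (fun i hi => ?_) (hinj.mono (filter_subset _ _))
          obtain ⟨hiE, hi⟩ := mem_filter.mp hi
          have his : i ≠ s := by rintro rfl; exact hi inter_subset_left
          have hit : i ≠ t := by rintro rfl; exact hi inter_subset_right
          refine mem_erase.mpr ⟨fun h => hi (h ▸ inter_subset_right), mem_erase.mpr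
            ⟨fun h => hi (h ▸ inter_subset_left), mem_powersetCard.mpr ⟨?_, hR i hiE⟩⟩⟩
          exact subset_union_of_card_inter_eq_two (hR i hiE) (hE i hiE s hs his)
            (hE i hiE t ht hit) (hE s hs t ht hst) hi
      _ = 2 := by
          rw [card_erase_of_mem hRt, card_erase_of_mem hRs, card_powersetCard, hunion]
          rfl
  have := card_filter_add_card_filter_not (s := E) (fun i => R s ∩ R t ⊆ R i)
  omega

end Triples

section Opposition

variable {k : ℕ} {V : Type*} [DecidableEq V] {e f : Fin k ↪ V}

theorem Opposed.two_le_card_inter (h : Opposed e f) : 2 ≤ #(univ.map e ∩ univ.map f) := by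
  obtain ⟨u, v, huv, hvu⟩ := h
  have hne : u ≠ v := by rintro rfl; exact Precedes.irrefl u huv
  refine (card_pair hne).symm.le.trans (card_le_card ?_)
  rw [insert_subset_iff, singleton_subset_iff]
  exact ⟨mem_inter.mpr ⟨huv.mem_map_univ_left, hvu.mem_map_univ_right⟩,
    mem_inter.mpr ⟨huv.mem_map_univ_right, hvu.mem_map_univ_left⟩⟩

theorem Opposed.precedes_iff_not_precedes (h : Opposed e f) {p q : V}
    (hpq : univ.map e ∩ univ.map f ⊆ {p, q}) : Precedes e p q ↔ ¬ Precedes f p q := by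
  obtain ⟨u, v, huv, hvu⟩ := h
  have hu : u = p ∨ u = q := by
    simpa using hpq (mem_inter.mpr ⟨huv.mem_map_univ_left, hvu.mem_map_univ_right⟩)
  have hv : v = p ∨ v = q := by
    simpa using hpq (mem_inter.mpr ⟨huv.mem_map_univ_right, hvu.mem_map_univ_left⟩)
  have hne : u ≠ v := by rintro rfl; exact Precedes.irrefl u huv
  rcases hu with rfl | rfl <;> rcases hv with rfl | rfl
  · exact absurd rfl hne
  · exact ⟨fun _ hf => hvu.asymm hf, fun _ => huv⟩
  · exact ⟨fun he => absurd he huv.asymm, fun hf => absurd hvu hf⟩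
  · exact absurd rfl hne

end Opposition

namespace OrientedHypergraph

variable {V : Type*} [DecidableEq V]

theorem card_inter_eq_two_of_opposed (H : OrientedHypergraph 3 V) {e f : Fin 3 ↪ V}
    (he : e ∈ H.edges) (hf : f ∈ H.edges) (hef : e ≠ f) (h : Opposed e f) :
    #(univ.map e ∩ univ.map f) = 2 := by
  refine le_antisymm ?_ h.two_le_card_inter
  by_contra! h3
  have hcap : univ.map e ∩ univ.map f = univ.map e :=
    eq_of_subset_of_card_le inter_subset_left (by simpa [Nat.succ_le_iff] using h3)
  have hmap : univ.map e = univ.map f :=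
    eq_of_subset_of_card_le (hcap ▸ inter_subset_right) (by simp)
  refine hef (H.eq_of_range_eq e he f hf ?_)
  simpa using congrArg (fun s : Finset V => (s : Set V)) hmap

theorem exists_ne_not_opposed (H : OrientedHypergraph 3 V) (h5 : 5 ≤ #H.edges) :
    ∃ e ∈ H.edges, ∃ f ∈ H.edges, e ≠ f ∧ ¬ Opposed e f := by
  by_contra! hopp
  have hinter := fun e he f hf hef =>
    H.card_inter_eq_two_of_opposed he hf hef (hopp e he f hf hef)
  obtain ⟨P, hP, h3⟩ := exists_card_two_subset_of_card_inter_eq_two (by simp) hinter h5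
  obtain ⟨p, q, -, rfl⟩ := card_eq_two.mp hP
  have horient : ∀ e ∈ {e ∈ H.edges | {p, q} ⊆ univ.map e},
      ∀ f ∈ {e ∈ H.edges | {p, q} ⊆ univ.map e}, e ≠ f →
        (Precedes e p q ↔ ¬ Precedes f p q) := by
    intro e he f hf hef
    rw [mem_filter] at he hf
    refine (hopp e he.1 f hf.1 hef).precedes_iff_not_precedes
      (eq_of_subset_of_card_le (subset_inter he.2 hf.2) ?_).symm.subset
    rw [hinter e he.1 f hf.1 hef, hP]
  obtain ⟨g₁, g₂, g₃, h₁, h₂, h₃, h₁₂, h₁₃, h₂₃⟩ := two_lt_card_iff.mp h3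
  have := horient g₁ h₁ g₂ h₂ h₁₂
  have := horient g₁ h₁ g₃ h₃ h₁₃
  have := horient g₂ h₂ g₃ h₃ h₂₃
  tauto

end OrientedHypergraph

/-- every oriented `3`-uniform hypergraph with Property O has
strictly more than `6` edges, i.e. `f(3) > 6`. -/
theorem f_three_gt_six {V : Type*} [Fintype V]
    (H : OrientedHypergraph 3 V) (hO : PropertyO H) :
    6 < H.edges.card := by
  classical
  by_contra! hle
  have hcover := hO.exists_mem_consistentOrders
  have hN : Fintype.card (V ≃ Fin (Fintype.card V)) = (Fintype.card V)! :=
    Fintype.card_equiv (Fintype.equivFin V)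
  have hcount (e : Fin 3 ↪ V) : 6 * #(consistentOrders e) = (Fintype.card V)! :=
    factorial_mul_card_consistentOrders e
  have hsum : 6 * ∑ e ∈ H.edges, #(consistentOrders e) = #H.edges * (Fintype.card V)! := by
    rw [mul_sum, sum_congr rfl fun e _ => hcount e, sum_const, smul_eq_mul]
  have hlower := hN ▸ card_le_sum_card_of_cover hcover
  have h6 : 6 ≤ #H.edges := le_of_mul_le_mul_right (by linarith) (Nat.factorial_pos _)
  have hdisj := pairwiseDisjoint_of_cover_of_sum_card_le hcover (by nlinarith)
  obtain ⟨e, he, f, hf, hef, hno⟩ := H.exists_ne_not_opposed (by omega)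
  obtain ⟨σ, hσe, hσf⟩ := exists_mem_consistentOrders_of_not_opposed hno
  exact disjoint_left.mp (hdisj he hf hef) hσe hσf
end
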